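/- arXiv:2012.15775 — 6 statements merged into one kernel-verified Lean document; each statement's English description precedes it below -/
import Mathlib

section
/- In a subcubic graph G with edge weights w, any two distinct problematic triangles of G are vertex-disjoint. -/
open Finset
open scoped Classical

namespace Paper

variable {V : Type*}

/-- `t` is the vertex set of a triangle (cycle of length 3) of `G`. -/
def IsTriangle (G : SimpleGraph V) (t : Finset V) : Prop :=
  t.card = 3 ∧ ∀ x ∈ t, ∀ y ∈ t, x ≠ y → G.Adj x y

/-- The (three) edges of a triangle with vertex set `t`. -/
def triEdges [DecidableEq V] (t : Finset V) : Finset (Sym2 V) :=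
  t.sym2.filter (fun e => ¬ e.IsDiag)

/-- Some connected component of `G` is isomorphic to the complete graph `K₄`:
there are four pairwise distinct, pairwise adjacent vertices that have no
neighbours outside of these four vertices. -/
def HasK4Component (G : SimpleGraph V) : Prop :=
  ∃ a b c d : V, a ≠ b ∧ a ≠ c ∧ a ≠ d ∧ b ≠ c ∧ b ≠ d ∧ c ≠ d ∧
    G.Adj a b ∧ G.Adj a c ∧ G.Adj a d ∧ G.Adj b c ∧ G.Adj b d ∧ G.Adj c d ∧
    ∀ x y : V, (x = a ∨ x = b ∨ x = c ∨ x = d) → G.Adj x y →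
      (y = a ∨ y = b ∨ y = c ∨ y = d)

/-- The degree of the vertex `v` in the edge set `M`, i.e. the number of edges
of `M` incident to `v`. -/
noncomputable def degIn (M : Finset (Sym2 V)) (v : V) : ℕ :=
  (M.filter (fun e => v ∈ e)).card

/-- `M` is a 2-matching of `G`: a set of edges of `G` such that every vertex is
incident to at most two of its edges. -/
def Is2Matching (G : SimpleGraph V) (M : Finset (Sym2 V)) : Prop :=
  (∀ e ∈ M, e ∈ G.edgeSet) ∧ ∀ v : V, degIn M v ≤ 2

/-- No triangle of `G` has all three of its edges in `M`. -/
def TriangleFree [DecidableEq V] (G : SimpleGraph V) (M : Finset (Sym2 V)) : Prop :=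
  ∀ t : Finset V, IsTriangle G t → ¬ triEdges t ⊆ M

/-- The triangle `t` is unproblematic: some other triangle `t'` shares an edge
with `t` and `w(t) ≤ w(t')`. -/
def TriUnprob [DecidableEq V] (G : SimpleGraph V) (w : Sym2 V → ℝ) (t : Finset V) : Prop :=
  ∃ t' : Finset V, IsTriangle G t' ∧ t' ≠ t ∧ (triEdges t ∩ triEdges t').Nonempty ∧
    ∑ e ∈ triEdges t, w e ≤ ∑ e ∈ triEdges t', w e

/-- The triangle `t` is problematic. -/
def ProblemTri [DecidableEq V] (G : SimpleGraph V) (w : Sym2 V → ℝ) (t : Finset V) : Prop :=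
  IsTriangle G t ∧ ¬ TriUnprob G w t


/-! Two distinct triangles sharing two vertices share an edge, so the lighter of them is
unproblematic. Two triangles sharing exactly one vertex `v` give `v` four distinct
neighbours, which a subcubic graph does not allow. -/

section

variable [DecidableEq V] {G : SimpleGraph V}

theorem mk_mem_triEdges {t : Finset V} {u v : V} :
    s(u, v) ∈ triEdges t ↔ u ∈ t ∧ v ∈ t ∧ u ≠ v := by
  simp [triEdges, and_assoc]

theorem ProblemTri.eq_of_triEdges_inter_nonempty {w : Sym2 V → ℝ} {t₁ t₂ : Finset V}
    (hp₁ : ProblemTri G w t₁) (hp₂ : ProblemTri G w t₂)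
    (hshare : (triEdges t₁ ∩ triEdges t₂).Nonempty) : t₁ = t₂ := by
  by_contra hne
  rcases le_total (∑ e ∈ triEdges t₁, w e) (∑ e ∈ triEdges t₂, w e) with h | h
  · exact hp₁.2 ⟨t₂, hp₂.1, Ne.symm hne, hshare, h⟩
  · exact hp₂.2 ⟨t₁, hp₁.1, hne, by rwa [Finset.inter_comm], h⟩

theorem ProblemTri.card_inter_le_one {w : Sym2 V → ℝ} {t₁ t₂ : Finset V}
    (hp₁ : ProblemTri G w t₁) (hp₂ : ProblemTri G w t₂) (hne : t₁ ≠ t₂) :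
    (t₁ ∩ t₂).card ≤ 1 := by
  by_contra! h
  obtain ⟨u, hu, v, hv, huv⟩ := Finset.one_lt_card.mp h
  rw [Finset.mem_inter] at hu hv
  have hedge : s(u, v) ∈ triEdges t₁ ∩ triEdges t₂ :=
    Finset.mem_inter.mpr ⟨mk_mem_triEdges.mpr ⟨hu.1, hv.1, huv⟩,
      mk_mem_triEdges.mpr ⟨hu.2, hv.2, huv⟩⟩
  exact hne (hp₁.eq_of_triEdges_inter_nonempty hp₂ ⟨_, hedge⟩)

end

theorem IsTriangle.four_le_degree_of_inter_eq_singleton [DecidableEq V]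
    {G : SimpleGraph V} {t₁ t₂ : Finset V} {v : V} [Fintype (G.neighborSet v)]
    (ht₁ : IsTriangle G t₁) (ht₂ : IsTriangle G t₂) (hinter : t₁ ∩ t₂ = {v}) :
    4 ≤ G.degree v := by
  have hv : v ∈ t₁ ∩ t₂ := hinter ▸ Finset.mem_singleton_self v
  rw [Finset.mem_inter] at hv
  have hnbrs : (t₁ ∪ t₂).erase v ⊆ G.neighborFinset v := by
    intro x hx
    obtain ⟨hxv, hx⟩ := Finset.mem_erase.mp hx
    rw [SimpleGraph.mem_neighborFinset]
    rcases Finset.mem_union.mp hx with hx | hx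
    · exact ht₁.2 v hv.1 x hx (Ne.symm hxv)
    · exact ht₂.2 v hv.2 x hx (Ne.symm hxv)
  have hcard : ((t₁ ∪ t₂).erase v).card = 4 := by
    have := Finset.card_union_add_card_inter t₁ t₂
    rw [hinter, Finset.card_singleton, ht₁.1, ht₂.1] at this
    rw [Finset.card_erase_of_mem (Finset.mem_union_left _ hv.1)]
    omega
  rw [← hcard, SimpleGraph.degree]
  exact Finset.card_le_card hnbrs

/-- In a subcubic graph `G` with edge weights `w`, any two
distinct problematic triangles of `G` are vertex-disjoint. -/
theorem problematic_triangles_disjoint {V : Type*} [Fintype V] [DecidableEq V]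
    (G : SimpleGraph V) [DecidableRel G.Adj]
    (hsub : ∀ v : V, G.degree v ≤ 3) (w : Sym2 V → ℝ)
    (t₁ t₂ : Finset V) (hp₁ : ProblemTri G w t₁) (hp₂ : ProblemTri G w t₂)
    (hne : t₁ ≠ t₂) :
    Disjoint t₁ t₂ := by
  by_contra hmeet
  obtain ⟨v, hv⟩ := Finset.not_disjoint_iff_nonempty_inter.mp hmeet
  have hinter : t₁ ∩ t₂ = {v} := Finset.eq_singleton_iff_unique_mem.mpr
    ⟨hv, fun x hx => Finset.card_le_one.mp (hp₁.card_inter_le_one hp₂ hne) x hx v hv⟩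
  have hdeg := hp₁.1.four_le_degree_of_inter_eq_singleton hp₂.1 hinter
  have := hsub v
  omega

end Paper
end

section
/- Let G be a subcubic graph with nonnegative edge weights w, let t=(a,b,c) and t'=(a,b,d) with d ∉ {a,b,c} be two triangles of G sharing the edge (a,b) and satisfying w(t) ≤ w(t'), and let M be a 2-matching of G containing all three edges of t. Then there exists a 2-matching M2 of G with w(M2) ≥ w(M) such that M2 does not contain all three edges of t, and every triangle of G all of whose edges lie in M2 also has all of its edges in M. -/
open Finset
open scoped Classical

namespace Paper

variable {V : Type*}

/-
Since `M` already uses `ab`, `ac`, `bc`, the vertices `a` and `b` are saturated, so `ad`, `bd ∉ M`,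
and `d`, having degree at most three, meets at most one edge of `M`. By `w(abc) ≤ w(abd)` one of
`w(ac) ≤ w(ad)`, `w(bc) ≤ w(bd)` holds, by symmetry the first. Exchanging `ac` for `ad` keeps a
2-matching, does not lose weight and breaks `abc`. A triangle using `ad` has its third vertex among
the neighbours `b, c` of `a`, and needs `bd ∉ M₂` resp. `ac ∉ M₂`, so no new triangle appears.
-/

section Degree

variable [DecidableEq V] {G : SimpleGraph V} {M : Finset (Sym2 V)} {e f : Sym2 V} {v : V}

/-- `degIn` filters with the classical instance of `Decidable (v ∈ e)`; this restates it with the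
one derived from `DecidableEq V`, which `insert` and `erase` lemmas produce. -/
lemma degIn_eq_card_filter (M : Finset (Sym2 V)) (v : V) :
    degIn M v = (M.filter (v ∈ ·)).card := by
  unfold degIn
  congr

lemma degIn_erase_le (M : Finset (Sym2 V)) (e : Sym2 V) (v : V) :
    degIn (M.erase e) v ≤ degIn M v := by
  rw [degIn_eq_card_filter, degIn_eq_card_filter]
  exact card_le_card (filter_subset_filter _ (erase_subset _ _))

lemma degIn_erase_add_one (he : e ∈ M) (hv : v ∈ e) : degIn (M.erase e) v + 1 = degIn M v := by
  rw [degIn_eq_card_filter, degIn_eq_card_filter, filter_erase]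
  exact card_erase_add_one (mem_filter.2 ⟨he, hv⟩)

lemma degIn_insert_le (M : Finset (Sym2 V)) (f : Sym2 V) (v : V) :
    degIn (insert f M) v ≤ degIn M v + 1 := by
  rw [degIn_eq_card_filter, degIn_eq_card_filter, filter_insert]
  split_ifs
  · exact card_insert_le _ _
  · omega

lemma degIn_insert_of_notMem (hv : v ∉ f) : degIn (insert f M) v = degIn M v := by
  rw [degIn_eq_card_filter, degIn_eq_card_filter, filter_insert, if_neg hv]

lemma eq_or_eq_of_degIn_le_two {e₁ e₂ : Sym2 V} (hdeg : degIn M v ≤ 2) (hne : e₁ ≠ e₂)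
    (he₁ : e₁ ∈ M) (he₂ : e₂ ∈ M) (hv₁ : v ∈ e₁) (hv₂ : v ∈ e₂) (he : e ∈ M) (hv : v ∈ e) :
    e = e₁ ∨ e = e₂ := by
  have hpair : {e₁, e₂} ⊆ M.filter (v ∈ ·) := by
    simp only [insert_subset_iff, singleton_subset_iff, mem_filter]
    exact ⟨⟨he₁, hv₁⟩, he₂, hv₂⟩
  have hcard : (M.filter (v ∈ ·)).card ≤ ({e₁, e₂} : Finset _).card := by
    rw [card_pair hne, ← degIn_eq_card_filter]; exact hdeg
  have hmem : e ∈ M.filter (v ∈ ·) := mem_filter.2 ⟨he, hv⟩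
  rw [← eq_of_subset_of_card_le hpair hcard] at hmem
  simpa using hmem

lemma degIn_add_card_le_degree [Fintype (G.neighborSet v)] {F : Finset (Sym2 V)}
    (hM : ∀ e ∈ M, e ∈ G.edgeSet) (hF : ∀ e ∈ F, e ∈ G.edgeSet ∧ v ∈ e) (hFM : Disjoint F M) :
    degIn M v + F.card ≤ G.degree v := by
  rw [← G.card_incidenceFinset_eq_degree, degIn_eq_card_filter, ← card_union_of_disjoint
    (hFM.symm.mono_left (filter_subset _ _))]
  refine card_le_card fun e he => ?_
  rw [G.mem_incidenceFinset]
  rcases mem_union.1 he with he | he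
  · exact ⟨hM e (mem_filter.1 he).1, (mem_filter.1 he).2⟩
  · exact hF e he

end Degree

lemma eq_or_eq_or_eq_of_adj_of_degree_le_three [DecidableEq V] {G : SimpleGraph V}
    {v x y z u : V} [Fintype (G.neighborSet v)] (hdeg : G.degree v ≤ 3)
    (hxy : x ≠ y) (hxz : x ≠ z) (hyz : y ≠ z)
    (hx : G.Adj v x) (hy : G.Adj v y) (hz : G.Adj v z) (hu : G.Adj v u) :
    u = x ∨ u = y ∨ u = z := by
  have hsub : {x, y, z} ⊆ G.neighborFinset v := by
    simp only [insert_subset_iff, singleton_subset_iff, SimpleGraph.mem_neighborFinset]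
    exact ⟨hx, hy, hz⟩
  have hcard : (G.neighborFinset v).card ≤ ({x, y, z} : Finset V).card := by
    rw [card_eq_three.2 ⟨x, y, z, hxy, hxz, hyz, rfl⟩, G.card_neighborFinset_eq_degree]
    exact hdeg
  have hmem := (G.mem_neighborFinset v u).2 hu
  rw [← eq_of_subset_of_card_le hsub hcard] at hmem
  simpa using hmem

section Triangle

variable [DecidableEq V] {G : SimpleGraph V}

lemma ne_and_ne_and_ne_of_card_eq_three {x y z : V} (h : ({x, y, z} : Finset V).card = 3) :
    x ≠ y ∧ x ≠ z ∧ y ≠ z := by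
  refine ⟨?_, ?_, ?_⟩ <;> rintro rfl <;> simp at h <;>
    exact absurd (h ▸ card_le_two) (by decide)

lemma mem_triEdges {t : Finset V} {x y : V} : s(x, y) ∈ triEdges t ↔ x ∈ t ∧ y ∈ t ∧ x ≠ y := by
  simp [triEdges, and_assoc]

lemma triEdges_triple {x y z : V} (hxy : x ≠ y) (hxz : x ≠ z) (hyz : y ≠ z) :
    triEdges ({x, y, z} : Finset V) = {s(x, y), s(x, z), s(y, z)} := by
  ext e
  induction e using Sym2.ind with
  | _ u v =>
    simp only [mem_triEdges, mem_insert, mem_singleton, Sym2.eq_iff]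
    constructor
    · rintro ⟨hu, hv, huv⟩
      rcases hu with rfl | rfl | rfl <;> rcases hv with rfl | rfl | rfl <;> tauto
    · rintro ((⟨rfl, rfl⟩ | ⟨rfl, rfl⟩) | (⟨rfl, rfl⟩ | ⟨rfl, rfl⟩) | (⟨rfl, rfl⟩ | ⟨rfl, rfl⟩)) <;>
        tauto

lemma sum_triEdges_triple {x y z : V} (hxy : x ≠ y) (hxz : x ≠ z) (hyz : y ≠ z)
    (w : Sym2 V → ℝ) :
    ∑ e ∈ triEdges ({x, y, z} : Finset V), w e = w s(x, y) + w s(x, z) + w s(y, z) := by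
  rw [triEdges_triple hxy hxz hyz, sum_insert (by simp; tauto),
    sum_insert (by simp; tauto), sum_singleton, add_assoc]

lemma IsTriangle.exists_ne_ne {t : Finset V} (ht : IsTriangle G t) (x y : V) :
    ∃ z ∈ t, z ≠ x ∧ z ≠ y := by
  by_contra! h
  have hsub : t ⊆ {x, y} := fun z hz => by
    rcases eq_or_ne z x with rfl | hzx
    · simp
    · simp [h z hz hzx]
  have := (card_le_card hsub).trans card_le_two
  rw [ht.1] at this
  omega

end Triangle

section Exchange

variable [DecidableEq V] {G : SimpleGraph V} {M : Finset (Sym2 V)}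

lemma Is2Matching.exchange {u x y : V} (hM : Is2Matching G M) (hy : s(u, y) ∈ M)
    (hux : G.Adj u x) (hx : degIn M x ≤ 1) :
    Is2Matching G (insert s(u, x) (M.erase s(u, y))) := by
  refine ⟨fun e he => ?_, fun v => ?_⟩
  · rcases mem_insert.1 he with rfl | he
    · exact hux
    · exact hM.1 e (mem_of_mem_erase he)
  by_cases hv : v ∈ s(u, x)
  · have hins := degIn_insert_le (M.erase s(u, y)) s(u, x) v
    rcases Sym2.mem_iff.1 hv with rfl | rfl
    · have := degIn_erase_add_one hy (Sym2.mem_mk_left v y)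
      have := hM.2 v
      omega
    · have := degIn_erase_le M s(u, y) v
      omega
  · rw [degIn_insert_of_notMem hv]
    exact (degIn_erase_le _ _ _).trans (hM.2 v)

lemma triEdges_subset_of_subset_exchange {a b c d : V} [Fintype (G.neighborSet a)]
    (hdeg : G.degree a ≤ 3) (ht : IsTriangle G {a, b, c}) (had : G.Adj a d) (hdb : d ≠ b)
    (hdc : d ≠ c) (hbd : s(b, d) ∉ M) {t : Finset V} (htri : IsTriangle G t)
    (htM₂ : triEdges t ⊆ insert s(a, d) (M.erase s(a, c))) : triEdges t ⊆ M := by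
  obtain ⟨hab, hac, hbc⟩ := ne_and_ne_and_ne_of_card_eq_three ht.1
  by_cases hadt : s(a, d) ∈ triEdges t
  · exfalso
    obtain ⟨hat, hdt, -⟩ := mem_triEdges.1 hadt
    obtain ⟨z, hzt, hza, hzd⟩ := htri.exists_ne_ne a d
    have hab' : G.Adj a b := ht.2 a (by simp) b (by simp) hab
    have hac' : G.Adj a c := ht.2 a (by simp) c (by simp) hac
    rcases eq_or_eq_or_eq_of_adj_of_degree_le_three hdeg hbc hdb.symm hdc.symm hab' hac' had
      (htri.2 a hat z hzt hza.symm) with rfl | rfl | rfl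
    · have := htM₂ (mem_triEdges.2 ⟨hzt, hdt, hzd⟩)
      simp [hza, hzd, hbd] at this
    · have := htM₂ (mem_triEdges.2 ⟨hat, hzt, hza.symm⟩)
      simp [hza, hdc.symm] at this
    · exact hzd rfl
  · intro e he
    rcases mem_insert.1 (htM₂ he) with rfl | he'
    · exact absurd he hadt
    · exact mem_of_mem_erase he'

end Exchange

lemma exists_exchange_of_weight_le [DecidableEq V] {G : SimpleGraph V} [DecidableRel G.Adj]
    [Fintype V] (hsub : ∀ v : V, G.degree v ≤ 3) (w : Sym2 V → ℝ) {a b c d : V}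
    (ht : IsTriangle G {a, b, c}) (had : G.Adj a d) (hbd : G.Adj b d) (hdc : d ≠ c)
    (hle : w s(a, c) ≤ w s(a, d)) (M : Finset (Sym2 V)) (hM : Is2Matching G M)
    (htM : triEdges {a, b, c} ⊆ M) :
    ∃ M₂ : Finset (Sym2 V), Is2Matching G M₂ ∧
      ∑ e ∈ M, w e ≤ ∑ e ∈ M₂, w e ∧
      ¬ triEdges {a, b, c} ⊆ M₂ ∧
      ∀ t : Finset V, IsTriangle G t → triEdges t ⊆ M₂ → triEdges t ⊆ M := by
  obtain ⟨hab, hac, hbc⟩ := ne_and_ne_and_ne_of_card_eq_three ht.1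
  have hda : d ≠ a := had.ne.symm
  have hdb : d ≠ b := hbd.ne.symm
  have habM : s(a, b) ∈ M := htM (mem_triEdges.2 ⟨by simp, by simp, hab⟩)
  have hacM : s(a, c) ∈ M := htM (mem_triEdges.2 ⟨by simp, by simp, hac⟩)
  have hbcM : s(b, c) ∈ M := htM (mem_triEdges.2 ⟨by simp, by simp, hbc⟩)
  have hadM : s(a, d) ∉ M := fun h => by
    have := eq_or_eq_of_degIn_le_two (hM.2 a) (by simp [hbc]; tauto) habM hacM (by simp) (by simp)
      h (by simp)
    simp [hda, hdb, hdc] at this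
  have hbdM : s(b, d) ∉ M := fun h => by
    have := eq_or_eq_of_degIn_le_two (hM.2 b) (by simp [hac]; tauto) habM hbcM (by simp) (by simp)
      h (by simp)
    simp [hda, hdb, hdc] at this
  have hdegd : degIn M d ≤ 1 := by
    have := degIn_add_card_le_degree (v := d) (F := {s(a, d), s(b, d)}) hM.1
      (by simp [had, hbd]) (by simp [hadM, hbdM])
    rw [card_pair (by simp; tauto)] at this
    linarith [hsub d]
  refine ⟨_, hM.exchange hacM had hdegd, ?_, fun h => ?_,
    fun t htri htM₂ => triEdges_subset_of_subset_exchange (hsub a) ht had hdb hdc hbdM htri htM₂⟩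
  · rw [sum_insert fun h => hadM (mem_of_mem_erase h), sum_erase_eq_sub hacM]
    linarith
  · simpa [hda.symm, hdc.symm] using h (mem_triEdges.2 ⟨by simp, by simp, hac⟩)

theorem remove_unproblematic_triangle_general {V : Type*} [Fintype V] [DecidableEq V]
    (G : SimpleGraph V) [DecidableRel G.Adj]
    (hsub : ∀ v : V, G.degree v ≤ 3)
    (w : Sym2 V → ℝ)
    (a b c d : V)
    (ht : IsTriangle G {a, b, c}) (ht' : IsTriangle G {a, b, d})
    (hd : d ≠ a ∧ d ≠ b ∧ d ≠ c)
    (hwt : ∑ e ∈ triEdges {a, b, c}, w e ≤ ∑ e ∈ triEdges {a, b, d}, w e)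
    (M : Finset (Sym2 V)) (hM : Is2Matching G M)
    (htM : triEdges {a, b, c} ⊆ M) :
    ∃ M₂ : Finset (Sym2 V), Is2Matching G M₂ ∧
      ∑ e ∈ M, w e ≤ ∑ e ∈ M₂, w e ∧
      ¬ triEdges {a, b, c} ⊆ M₂ ∧
      ∀ t : Finset V, IsTriangle G t → triEdges t ⊆ M₂ → triEdges t ⊆ M := by
  obtain ⟨hda, hdb, hdc⟩ := hd
  obtain ⟨hab, hac, hbc⟩ := ne_and_ne_and_ne_of_card_eq_three ht.1
  have had : G.Adj a d := ht'.2 a (by simp) d (by simp) hda.symm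
  have hbd : G.Adj b d := ht'.2 b (by simp) d (by simp) hdb.symm
  rw [sum_triEdges_triple hab hac hbc, sum_triEdges_triple hab hda.symm hdb.symm] at hwt
  by_cases hle : w s(a, c) ≤ w s(a, d)
  · exact exists_exchange_of_weight_le hsub w ht had hbd hdc hle M hM htM
  · have hswap : ({b, a, c} : Finset V) = {a, b, c} := insert_comm b a {c}
    have hle' : w s(b, c) ≤ w s(b, d) := by linarith
    simpa only [hswap] using exists_exchange_of_weight_le hsub w (hswap ▸ ht) hbd had hdc hle' M hM
      (hswap ▸ htM)

/-- Let `G` be subcubic with nonnegative edge weights `w`, let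
`t = (a,b,c)` and `t' = (a,b,d)` (with `d ∉ {a,b,c}`) be triangles of `G`
sharing the edge `(a,b)` and satisfying `w(t) ≤ w(t')`, and let `M` be a
2-matching of `G` containing all three edges of `t`. Then there is a
2-matching `M₂` of `G` with `w(M₂) ≥ w(M)` that does not contain all three
edges of `t`, and every triangle of `G` all of whose edges lie in `M₂` also
has all of its edges in `M`. -/
theorem remove_unproblematic_triangle {V : Type*} [Fintype V] [DecidableEq V]
    (G : SimpleGraph V) [DecidableRel G.Adj]
    (hsub : ∀ v : V, G.degree v ≤ 3)
    (w : Sym2 V → ℝ) (hw : ∀ e, 0 ≤ w e)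
    (a b c d : V)
    (ht : IsTriangle G {a, b, c}) (ht' : IsTriangle G {a, b, d})
    (hd : d ≠ a ∧ d ≠ b ∧ d ≠ c)
    (hwt : ∑ e ∈ triEdges {a, b, c}, w e ≤ ∑ e ∈ triEdges {a, b, d}, w e)
    (M : Finset (Sym2 V)) (hM : Is2Matching G M)
    (htM : triEdges {a, b, c} ⊆ M) :
    ∃ M₂ : Finset (Sym2 V), Is2Matching G M₂ ∧
      ∑ e ∈ M, w e ≤ ∑ e ∈ M₂, w e ∧
      ¬ triEdges {a, b, c} ⊆ M₂ ∧
      ∀ t : Finset V, IsTriangle G t → triEdges t ⊆ M₂ → triEdges t ⊆ M :=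
  remove_unproblematic_triangle_general G hsub w a b c d ht ht' hd hwt M hM htM

end Paper
end

section
/- For every triangle-free 2-matching M of G there exists an (l,u)-matching M' of the auxiliary graph G' with w'(M') = w(M). -/
open Finset
open scoped Classical

namespace Paper

variable {V : Type*}

/-- The new vertices of the auxiliary graph `G'` for the triangle-free
2-matching problem: `sub p q` is the subdivision vertex `v^p_q`, `glob d` is
the global vertex `u_d`, and `globT t` is the global vertex `u_t` of the
problematic triangle with vertex set `t`. -/
inductive NV (V : Type*) where
  | sub : V → V → NV V
  | glob : V → NV V
  | globT : Finset V → NV V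

section TriAux

variable [DecidableEq V] (G : SimpleGraph V) (w : Sym2 V → ℝ)

/-- `e` is an edge of some problematic triangle of `G`. -/
def InPT (e : Sym2 V) : Prop :=
  ∃ t : Finset V, ProblemTri G w t ∧ e ∈ triEdges t

/-- The weight `r_p` of the half-edges of a problematic triangle incident to
`p`, where `q` is the other endpoint of the subdivided edge: the unique reals
`r` on the vertices of the triangle with `r_x + r_y = w (x, y)` for the three
edges `(x, y)` of the triangle. -/
noncomputable def halfW (p q : V) : ℝ :=
  if h : ∃ t : Finset V, ProblemTri G w t ∧ s(p, q) ∈ triEdges t then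
    (w s(p, q) + ∑ z ∈ h.choose \ {p, q}, (w s(p, z) - w s(q, z))) / 2
  else 0

/-- The base adjacency relation of the auxiliary graph `G'`: edges of `G` not
lying in a problematic triangle are kept; each edge `(p, q)` of a problematic
triangle is replaced by the half-edges `(p, v^p_q)`, `(q, v^q_p)` and the
eliminator `(v^p_q, v^q_p)`; for a problematic triangle `t = (a, b, c)` the
global vertex `u_d` (for `d ∈ {a, b, c}`) is joined to `u_t` and to the
subdivision vertices `v^d_q` connected to `d`. -/
def triRel : V ⊕ NV V → V ⊕ NV V → Prop
  | Sum.inl x, Sum.inl y => G.Adj x y ∧ ¬ InPT G w s(x, y)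
  | Sum.inl p, Sum.inr (NV.sub p' q) => p = p' ∧ InPT G w s(p', q)
  | Sum.inr (NV.sub p q), Sum.inr (NV.sub p' q') => p = q' ∧ q = p' ∧ InPT G w s(p, q)
  | Sum.inr (NV.glob d), Sum.inr (NV.globT t) => ProblemTri G w t ∧ d ∈ t
  | Sum.inr (NV.glob d), Sum.inr (NV.sub p q) => d = p ∧ InPT G w s(p, q)
  | _, _ => False

/-- The auxiliary graph `G'` for the triangle-free 2-matching problem. -/
def triAuxG : SimpleGraph (V ⊕ NV V) := SimpleGraph.fromRel (triRel G w)

/-- One-sided weight function on ordered pairs of vertices of `G'`: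
kept edges of `G` get weight `w`, the half-edge `(p, v^p_q)` gets weight
`r_p = halfW p q`, and all other edges (eliminators, edges at global
vertices) get weight `0`. (It is symmetrized in `triW` below.) -/
noncomputable def triWbase : V ⊕ NV V → V ⊕ NV V → ℝ
  | Sum.inl x, Sum.inl y => w s(x, y) / 2
  | Sum.inl p, Sum.inr (NV.sub p' q) => if p = p' then halfW G w p q else 0
  | _, _ => 0

/-- The weight function `w'` of the auxiliary graph `G'`. -/
noncomputable def triW : Sym2 (V ⊕ NV V) → ℝ :=
  Sym2.lift ⟨fun x y => triWbase G w x y + triWbase G w y x,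
    fun _ _ => add_comm _ _⟩

/-- The actual vertices of `G'`: all vertices of `G` together with the gadget
vertices of the problematic triangles. -/
def triMeaning : V ⊕ NV V → Prop
  | Sum.inl _ => True
  | Sum.inr (NV.sub p q) => InPT G w s(p, q)
  | Sum.inr (NV.glob d) => ∃ t : Finset V, ProblemTri G w t ∧ d ∈ t
  | Sum.inr (NV.globT t) => ProblemTri G w t

/-- Lower capacities: `l(v) = 0` for `v ∈ V` and `l(v) = 1` for new vertices. -/
def triLowCap : V ⊕ NV V → ℕ
  | Sum.inl _ => 0
  | Sum.inr _ => 1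

/-- Upper capacities: `u(v) = 2` for `v ∈ V` and `u(v) = 1` for new vertices. -/
def triUpCap : V ⊕ NV V → ℕ
  | Sum.inl _ => 2
  | Sum.inr _ => 1

/-- `M'` is an `(l,u)`-matching of the auxiliary graph `G'`:
a set of edges of `G'` with `l(v) ≤ deg_{M'}(v) ≤ u(v)` for every vertex `v`
of `G'`. -/
def TriLU (M' : Finset (Sym2 (V ⊕ NV V))) : Prop :=
  (∀ e ∈ M', e ∈ (triAuxG G w).edgeSet) ∧
  ∀ v : V ⊕ NV V, triMeaning G w v →
    triLowCap v ≤ degIn M' v ∧ degIn M' v ≤ triUpCap v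

end TriAux

section MyAux

variable {V : Type*} [DecidableEq V]

lemma mem_triEdges_mk {t : Finset V} {u v : V} :
    s(u, v) ∈ triEdges t ↔ (u ∈ t ∧ v ∈ t) ∧ u ≠ v := by
  simp only [triEdges, Finset.mem_filter, Finset.mk_mem_sym2_iff]
  constructor
  · rintro ⟨h1, h2⟩
    exact ⟨h1, fun h => h2 (by simp [h])⟩
  · rintro ⟨h1, h2⟩
    refine ⟨h1, fun h => h2 ?_⟩
    simpa using h

lemma InPT.ne {G : SimpleGraph V} {w : Sym2 V → ℝ} {p q : V}
    (h : InPT G w s(p, q)) : p ≠ q := by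
  obtain ⟨t, _, ht⟩ := h
  exact (mem_triEdges_mk.1 ht).2

lemma InPT_of_mem {G : SimpleGraph V} {w : Sym2 V → ℝ} {t : Finset V} {p q : V}
    (ht : ProblemTri G w t) (hp : p ∈ t) (hq : q ∈ t) (hne : p ≠ q) :
    InPT G w s(p, q) :=
  ⟨t, ht, mem_triEdges_mk.2 ⟨⟨hp, hq⟩, hne⟩⟩

lemma halfW_add {G : SimpleGraph V} {w : Sym2 V → ℝ} {p q : V}
    (h : InPT G w s(p, q)) :
    halfW G w p q + halfW G w q p = w s(p, q) := by
  have h1 : ∃ t : Finset V, ProblemTri G w t ∧ s(p, q) ∈ triEdges t := h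
  have h2 : ∃ t : Finset V, ProblemTri G w t ∧ s(q, p) ∈ triEdges t := by
    rwa [Sym2.eq_swap]
  have key : ∀ (P Q : Finset V → Prop) (hP : ∃ t, P t) (hQ : ∃ t, Q t),
      P = Q → hP.choose = hQ.choose := by rintro P Q hP hQ rfl; rfl
  have hch : h2.choose = h1.choose := by
    apply key
    funext t
    rw [show s(q, p) = s(p, q) from Sym2.eq_swap]
  rw [halfW, halfW, dif_pos h1, dif_pos h2, hch,
    show s(q, p) = s(p, q) from Sym2.eq_swap,
    show ({q, p} : Finset V) = {p, q} from Finset.pair_comm q p]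
  simp only [Finset.sum_sub_distrib]
  ring

/-- Distinct problematic triangles are vertex-disjoint. -/
lemma problemTri_disjoint [Fintype V] {G : SimpleGraph V} [DecidableRel G.Adj]
    (hsub : ∀ v : V, G.degree v ≤ 3) {w : Sym2 V → ℝ} {t t' : Finset V}
    (ht : ProblemTri G w t) (ht' : ProblemTri G w t') (hne : t ≠ t')
    {d : V} (hd : d ∈ t) (hd' : d ∈ t') : False := by
  have hshare : ∀ u v : V, u ≠ v → u ∈ t → u ∈ t' → v ∈ t → v ∈ t' → False := by
    intro u v huv hu hu' hv hv'
    have he : s(u, v) ∈ triEdges t := mem_triEdges_mk.2 ⟨⟨hu, hv⟩, huv⟩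
    have he' : s(u, v) ∈ triEdges t' := mem_triEdges_mk.2 ⟨⟨hu', hv'⟩, huv⟩
    rcases le_total (∑ e ∈ triEdges t, w e) (∑ e ∈ triEdges t', w e) with hle | hle
    · exact ht.2 ⟨t', ht'.1, hne.symm, ⟨s(u, v), Finset.mem_inter.2 ⟨he, he'⟩⟩, hle⟩
    · exact ht'.2 ⟨t, ht.1, hne, ⟨s(u, v), Finset.mem_inter.2 ⟨he', he⟩⟩, hle⟩
  have h2 : (t.erase d).card = 2 := by
    rw [Finset.card_erase_of_mem hd, ht.1.1]
  have h2' : (t'.erase d).card = 2 := by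
    rw [Finset.card_erase_of_mem hd', ht'.1.1]
  obtain ⟨a, b, hab, hE⟩ := Finset.card_eq_two.1 h2
  obtain ⟨c, e, hce, hE'⟩ := Finset.card_eq_two.1 h2'
  have ha : a ∈ t.erase d := by rw [hE]; simp
  have hb : b ∈ t.erase d := by rw [hE]; simp
  have hc : c ∈ t'.erase d := by rw [hE']; simp
  have he : e ∈ t'.erase d := by rw [hE']; simp
  have had := Finset.ne_of_mem_erase ha
  have hbd := Finset.ne_of_mem_erase hb
  have hcd := Finset.ne_of_mem_erase hc
  have hed := Finset.ne_of_mem_erase he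
  have hat := Finset.mem_of_mem_erase ha
  have hbt := Finset.mem_of_mem_erase hb
  have hct := Finset.mem_of_mem_erase hc
  have het := Finset.mem_of_mem_erase he
  by_cases hat' : a ∈ t'
  · exact hshare a d had hat hat' hd hd'
  by_cases hbt' : b ∈ t'
  · exact hshare b d hbd hbt hbt' hd hd'
  -- now a, b ∉ t', so {a,b,c,e} pairwise distinct, all neighbours of d
  have hac : a ≠ c := fun h => hat' (h ▸ hct)
  have hae : a ≠ e := fun h => hat' (h ▸ het)
  have hbc : b ≠ c := fun h => hbt' (h ▸ hct)
  have hbe : b ≠ e := fun h => hbt' (h ▸ het)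
  have hsubset : ({a, b, c, e} : Finset V) ⊆ G.neighborFinset d := by
    intro x hx
    rw [SimpleGraph.mem_neighborFinset]
    simp only [Finset.mem_insert, Finset.mem_singleton] at hx
    rcases hx with rfl | rfl | rfl | rfl
    · exact ht.1.2 d hd x hat had.symm
    · exact ht.1.2 d hd x hbt hbd.symm
    · exact ht'.1.2 d hd' x hct hcd.symm
    · exact ht'.1.2 d hd' x het hed.symm
  have hcard : ({a, b, c, e} : Finset V).card = 4 := by
    rw [Finset.card_insert_of_notMem (by simp [hab, hac, hae]),
      Finset.card_insert_of_notMem (by simp [hbc, hbe]),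
      Finset.card_insert_of_notMem (by simp [hce]),
      Finset.card_singleton]
  have := Finset.card_le_card hsubset
  rw [hcard, ← SimpleGraph.degree] at this
  have := hsub d
  omega

end MyAux

section MyApex

variable {V : Type*} [DecidableEq V]

/-- An apex of a triangle relative to `M`: a vertex of `t` contained in every
edge of `M ∩ triEdges t`. -/
noncomputable def apexM [Nonempty V] (M : Finset (Sym2 V)) (t : Finset V) : V :=
  Classical.epsilon fun d => d ∈ t ∧ ∀ e ∈ M ∩ triEdges t, d ∈ e

lemma apex_exists {G : SimpleGraph V} {M : Finset (Sym2 V)} {t : Finset V}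
    (ht : IsTriangle G t) (hTF : TriangleFree G M) :
    ∃ d : V, d ∈ t ∧ ∀ e ∈ M ∩ triEdges t, d ∈ e := by
  obtain ⟨e0, he0t, he0M⟩ := Finset.not_subset.1 (hTF t ht)
  induction e0 using Sym2.ind with
  | _ u v =>
  obtain ⟨⟨hu, hv⟩, huv⟩ := mem_triEdges_mk.1 he0t
  have hsd : (t \ {u, v}).card = 1 := by
    rw [Finset.card_sdiff_of_subset (by intro x hx; simp only [Finset.mem_insert, Finset.mem_singleton] at hx; rcases hx with rfl | rfl; exacts [hu, hv])]
    rw [ht.1, Finset.card_pair huv]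
  obtain ⟨d, hd⟩ := Finset.card_eq_one.1 hsd
  have hdm : d ∈ t \ {u, v} := by rw [hd]; simp
  have hdt : d ∈ t := (Finset.mem_sdiff.1 hdm).1
  have hdu : d ≠ u := by have := (Finset.mem_sdiff.1 hdm).2; simp at this; exact this.1
  have hdv : d ≠ v := by have := (Finset.mem_sdiff.1 hdm).2; simp at this; exact this.2
  refine ⟨d, hdt, ?_⟩
  intro e he
  obtain ⟨heM, het⟩ := Finset.mem_inter.1 he
  induction e using Sym2.ind with
  | _ x y =>
  obtain ⟨⟨hx, hy⟩, hxy⟩ := mem_triEdges_mk.1 het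
  rw [Sym2.mem_iff]
  by_contra hcon
  push_neg at hcon
  obtain ⟨hxd, hyd⟩ := hcon
  -- x, y ∈ t \ {d} = {u, v}
  have hx' : x ∈ t \ ({d} : Finset V) := Finset.mem_sdiff.2 ⟨hx, by simpa using fun h => hxd h.symm⟩
  have hy' : y ∈ t \ ({d} : Finset V) := Finset.mem_sdiff.2 ⟨hy, by simpa using fun h => hyd h.symm⟩
  have huvsub : ({u, v} : Finset V) ⊆ t \ {d} := by
    intro z hz
    simp only [Finset.mem_insert, Finset.mem_singleton] at hz
    rcases hz with rfl | rfl
    · exact Finset.mem_sdiff.2 ⟨hu, by simpa using hdu.symm⟩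
    · exact Finset.mem_sdiff.2 ⟨hv, by simpa using hdv.symm⟩
  have hcard : (t \ ({d} : Finset V)).card = 2 := by
    rw [Finset.card_sdiff_of_subset (by simpa using hdt), ht.1, Finset.card_singleton]
  have heq : t \ ({d} : Finset V) = {u, v} :=
    (Finset.eq_of_subset_of_card_le huvsub (by rw [hcard, Finset.card_pair huv])).symm
  rw [heq] at hx' hy'
  simp only [Finset.mem_insert, Finset.mem_singleton] at hx' hy'
  have : s(x, y) = s(u, v) := by
    rcases hx' with rfl | rfl <;> rcases hy' with rfl | rfl
    · exact absurd rfl hxy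
    · rfl
    · exact Sym2.eq_swap
    · exact absurd rfl hxy
  exact he0M (this ▸ heM)

lemma apexM_spec [Nonempty V] {G : SimpleGraph V} {M : Finset (Sym2 V)} {t : Finset V}
    (ht : IsTriangle G t) (hTF : TriangleFree G M) :
    apexM M t ∈ t ∧ ∀ e ∈ M ∩ triEdges t, apexM M t ∈ e :=
  Classical.epsilon_spec (apex_exists ht hTF)

/-- The third vertex of `t` besides `d` and `a`. -/
lemma third_exists {G : SimpleGraph V} {t : Finset V} (ht : IsTriangle G t)
    {d a : V} (hd : d ∈ t) (ha : a ∈ t) (hda : d ≠ a) :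
    ∃! q : V, q ∈ t ∧ q ≠ d ∧ q ≠ a := by
  have hsub : ({d, a} : Finset V) ⊆ t := by
    intro x hx; simp only [Finset.mem_insert, Finset.mem_singleton] at hx
    rcases hx with rfl | rfl; exacts [hd, ha]
  have hcard : (t \ ({d, a} : Finset V)).card = 1 := by
    rw [Finset.card_sdiff_of_subset hsub, ht.1, Finset.card_pair hda]
  obtain ⟨q, hq⟩ := Finset.card_eq_one.1 hcard
  refine ⟨q, ?_, ?_⟩
  · have : q ∈ t \ ({d, a} : Finset V) := by rw [hq]; simp
    rw [Finset.mem_sdiff] at this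
    simp only [Finset.mem_insert, Finset.mem_singleton, not_or] at this
    exact ⟨this.1, this.2.1, this.2.2⟩
  · intro x hx
    have : x ∈ t \ ({d, a} : Finset V) := by
      rw [Finset.mem_sdiff]
      simp only [Finset.mem_insert, Finset.mem_singleton, not_or]
      exact ⟨hx.1, hx.2.1, hx.2.2⟩
    rw [hq] at this
    simpa using this

end MyApex

noncomputable instance NV.fintype {V : Type*} [Fintype V] [DecidableEq V] :
    Fintype (NV V) :=
  Fintype.ofSurjective
    (fun x : (V × V) ⊕ V ⊕ Finset V =>
      match x with
      | .inl (p, q) => NV.sub p q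
      | .inr (.inl d) => NV.glob d
      | .inr (.inr t) => NV.globT t)
    (by
      intro n
      cases n with
      | sub p q => exact ⟨.inl (p, q), rfl⟩
      | glob d => exact ⟨.inr (.inl d), rfl⟩
      | globT t => exact ⟨.inr (.inr t), rfl⟩)

section MyConstruction

variable {V : Type*} [Fintype V] [DecidableEq V] [Nonempty V]
  (G : SimpleGraph V) (w : Sym2 V → ℝ) (M : Finset (Sym2 V))

def keptP (e' : Sym2 (V ⊕ NV V)) : Prop :=
  ∃ x y : V, s(x, y) ∈ M ∧ ¬ InPT G w s(x, y) ∧ e' = s(.inl x, .inl y)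

def halfP (e' : Sym2 (V ⊕ NV V)) : Prop :=
  ∃ p q : V, s(p, q) ∈ M ∧ InPT G w s(p, q) ∧ e' = s(.inl p, .inr (NV.sub p q))

def elimP (e' : Sym2 (V ⊕ NV V)) : Prop :=
  ∃ (t : Finset V) (p : V), ProblemTri G w t ∧ p ∈ t ∧ p ≠ apexM M t ∧
    s(apexM M t, p) ∉ M ∧
    e' = s(.inr (NV.sub (apexM M t) p), .inr (NV.sub p (apexM M t)))

def globEP (e' : Sym2 (V ⊕ NV V)) : Prop :=
  ∃ (t : Finset V) (p q : V), ProblemTri G w t ∧ p ∈ t ∧ q ∈ t ∧ p ≠ q ∧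
    p ≠ apexM M t ∧ q ≠ apexM M t ∧ e' = s(.inr (NV.glob p), .inr (NV.sub p q))

def topP (e' : Sym2 (V ⊕ NV V)) : Prop :=
  ∃ t : Finset V, ProblemTri G w t ∧
    e' = s(.inr (NV.glob (apexM M t)), .inr (NV.globT t))

noncomputable def auxM : Finset (Sym2 (V ⊕ NV V)) :=
  Finset.univ.filter (fun e' => keptP G w M e' ∨ halfP G w M e' ∨ elimP G w M e' ∨
    globEP G w M e' ∨ topP G w M e')

lemma mem_auxM {e' : Sym2 (V ⊕ NV V)} :
    e' ∈ auxM G w M ↔ keptP G w M e' ∨ halfP G w M e' ∨ elimP G w M e' ∨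
      globEP G w M e' ∨ topP G w M e' := by
  simp [auxM]

end MyConstruction

section MyRfl

variable {V : Type*} [DecidableEq V] (G : SimpleGraph V) (w : Sym2 V → ℝ)

lemma triW_mk (x y : V ⊕ NV V) :
    triW G w s(x, y) = triWbase G w x y + triWbase G w y x := rfl

lemma triWbase_inl_inl (x y : V) :
    triWbase G w (Sum.inl x) (Sum.inl y) = w s(x, y) / 2 := rfl

lemma triWbase_inl_sub (p p' q : V) :
    triWbase G w (Sum.inl p) (Sum.inr (NV.sub p' q)) =
      if p = p' then halfW G w p q else 0 := rfl

lemma triWbase_inr (n : NV V) (y : V ⊕ NV V) :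
    triWbase G w (Sum.inr n) y = 0 := by
  cases y with
  | inl x => rfl
  | inr m => cases n <;> cases m <;> rfl

lemma triWbase_inl_glob (p : V) (d : V) :
    triWbase G w (Sum.inl p) (Sum.inr (NV.glob d)) = 0 := rfl

lemma triWbase_inl_globT (p : V) (t : Finset V) :
    triWbase G w (Sum.inl p) (Sum.inr (NV.globT t)) = 0 := rfl

lemma triRel_inl_inl (x y : V) :
    triRel G w (Sum.inl x) (Sum.inl y) = (G.Adj x y ∧ ¬ InPT G w s(x, y)) := rfl

lemma triRel_inl_sub (p p' q : V) :
    triRel G w (Sum.inl p) (Sum.inr (NV.sub p' q)) = (p = p' ∧ InPT G w s(p', q)) := rfl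

lemma triRel_sub_sub (p q p' q' : V) :
    triRel G w (Sum.inr (NV.sub p q)) (Sum.inr (NV.sub p' q')) =
      (p = q' ∧ q = p' ∧ InPT G w s(p, q)) := rfl

lemma triRel_glob_globT (d : V) (t : Finset V) :
    triRel G w (Sum.inr (NV.glob d)) (Sum.inr (NV.globT t)) =
      (ProblemTri G w t ∧ d ∈ t) := rfl

lemma triRel_glob_sub (d p q : V) :
    triRel G w (Sum.inr (NV.glob d)) (Sum.inr (NV.sub p q)) =
      (d = p ∧ InPT G w s(p, q)) := rfl

end MyRfl

section MyWeight

variable {V : Type*} [Fintype V] [DecidableEq V] [Nonempty V]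
  (G : SimpleGraph V) (w : Sym2 V → ℝ) (M : Finset (Sym2 V))

lemma shape_ll_lr {x y p : V} {n : NV V} :
    (s(Sum.inl x, Sum.inl y) : Sym2 (V ⊕ NV V)) ≠ s(Sum.inl p, Sum.inr n) := by
  simp [Sym2.eq_iff]

lemma shape_ll_rr {x y : V} {n m : NV V} :
    (s(Sum.inl x, Sum.inl y) : Sym2 (V ⊕ NV V)) ≠ s(Sum.inr n, Sum.inr m) := by
  simp [Sym2.eq_iff]

lemma shape_lr_rr {x : V} {k n m : NV V} :
    (s(Sum.inl x, Sum.inr k) : Sym2 (V ⊕ NV V)) ≠ s(Sum.inr n, Sum.inr m) := by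
  simp [Sym2.eq_iff]

lemma rest_shape {e' : Sym2 (V ⊕ NV V)}
    (h : elimP G w M e' ∨ globEP G w M e' ∨ topP G w M e') :
    ∃ n m : NV V, e' = s(Sum.inr n, Sum.inr m) := by
  rcases h with ⟨t, p, _, _, _, _, rfl⟩ | ⟨t, p, q, _, _, _, _, _, _, rfl⟩ | ⟨t, _, rfl⟩ <;>
    exact ⟨_, _, rfl⟩

lemma auxM_weight :
    ∑ e ∈ auxM G w M, triW G w e = ∑ e ∈ M, w e := by
  classical
  set A : Finset (Sym2 (V ⊕ NV V)) := Finset.univ.filter (keptP G w M) with hA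
  set B : Finset (Sym2 (V ⊕ NV V)) := Finset.univ.filter (halfP G w M) with hB
  set C : Finset (Sym2 (V ⊕ NV V)) := Finset.univ.filter
    (fun e' => elimP G w M e' ∨ globEP G w M e' ∨ topP G w M e') with hC
  have hsplit : auxM G w M = A ∪ (B ∪ C) := by
    ext e'
    simp only [mem_auxM, hA, hB, hC, Finset.mem_union, Finset.mem_filter,
      Finset.mem_univ, true_and]
  have hdisjBC : Disjoint B C := by
    rw [Finset.disjoint_left]
    intro e' heB heC
    simp only [hB, hC, Finset.mem_filter, Finset.mem_univ, true_and] at heB heC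
    obtain ⟨p, q, _, _, rfl⟩ := heB
    obtain ⟨n, m, hnm⟩ := rest_shape G w M heC
    exact shape_lr_rr hnm
  have hdisjA : Disjoint A (B ∪ C) := by
    rw [Finset.disjoint_left]
    intro e' heA heBC
    simp only [hA, Finset.mem_filter, Finset.mem_univ, true_and] at heA
    obtain ⟨x, y, _, _, rfl⟩ := heA
    rcases Finset.mem_union.1 heBC with heB | heC
    · simp only [hB, Finset.mem_filter, Finset.mem_univ, true_and] at heB
      obtain ⟨p, q, _, _, hpq⟩ := heB
      exact shape_ll_lr hpq
    · simp only [hC, Finset.mem_filter, Finset.mem_univ, true_and] at heC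
      obtain ⟨n, m, hnm⟩ := rest_shape G w M heC
      exact shape_ll_rr hnm
  rw [hsplit, Finset.sum_union hdisjA, Finset.sum_union hdisjBC]
  have hCzero : ∑ e ∈ C, triW G w e = 0 := by
    apply Finset.sum_eq_zero
    intro e' he'
    simp only [hC, Finset.mem_filter, Finset.mem_univ, true_and] at he'
    obtain ⟨n, m, rfl⟩ := rest_shape G w M he'
    rw [triW_mk, triWbase_inr, triWbase_inr, add_zero]
  have hAsum : ∑ e ∈ A, triW G w e = ∑ e ∈ M.filter (fun e => ¬ InPT G w e), w e := by
    have hAimg : A = (M.filter (fun e => ¬ InPT G w e)).image (Sym2.map Sum.inl) := by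
      ext e'
      simp only [hA, Finset.mem_filter, Finset.mem_univ, true_and, Finset.mem_image]
      constructor
      · rintro ⟨x, y, hm, hn, rfl⟩
        exact ⟨s(x, y), ⟨hm, hn⟩, Sym2.map_pair_eq _ _ _⟩
      · rintro ⟨e, ⟨hm, hn⟩, rfl⟩
        induction e using Sym2.ind with
        | _ x y => exact ⟨x, y, hm, hn, (Sym2.map_pair_eq _ _ _).symm⟩
    rw [hAimg, Finset.sum_image (fun a _ b _ h => Sym2.map.injective Sum.inl_injective h)]
    apply Finset.sum_congr rfl
    intro e _
    induction e using Sym2.ind with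
    | _ x y =>
      rw [Sym2.map_pair_eq, triW_mk, triWbase_inl_inl, triWbase_inl_inl,
        show s(y, x) = s(x, y) from Sym2.eq_swap]
      ring
  have hBsum : ∑ e ∈ B, triW G w e = ∑ e ∈ M.filter (fun e => InPT G w e), w e := by
    set P2 : Finset (V × V) := Finset.univ.filter
      (fun pq => s(pq.1, pq.2) ∈ M ∧ InPT G w s(pq.1, pq.2)) with hP2
    have hBimg : B = P2.image (fun pq => s(Sum.inl pq.1, Sum.inr (NV.sub pq.1 pq.2))) := by
      ext e'
      simp only [hB, hP2, Finset.mem_filter, Finset.mem_univ, true_and, Finset.mem_image]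
      constructor
      · rintro ⟨p, q, hm, hi, rfl⟩
        exact ⟨(p, q), ⟨hm, hi⟩, rfl⟩
      · rintro ⟨⟨p, q⟩, ⟨hm, hi⟩, rfl⟩
        exact ⟨p, q, hm, hi, rfl⟩
    have hinj : ∀ a ∈ P2, ∀ b ∈ P2,
        s(Sum.inl a.1, (Sum.inr (NV.sub a.1 a.2) : V ⊕ NV V)) =
          s(Sum.inl b.1, Sum.inr (NV.sub b.1 b.2)) → a = b := by
      rintro ⟨p, q⟩ _ ⟨p', q'⟩ _ h
      rw [Sym2.eq_iff] at h
      rcases h with ⟨h1, h2⟩ | ⟨h1, _⟩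
      · simp only [Sum.inr.injEq, NV.sub.injEq] at h2
        obtain ⟨rfl, rfl⟩ := h2
        rfl
      · exact absurd h1 (by simp)
    rw [hBimg, Finset.sum_image hinj]
    have hterm : ∀ pq : V × V,
        triW G w s(Sum.inl pq.1, Sum.inr (NV.sub pq.1 pq.2)) = halfW G w pq.1 pq.2 := by
      rintro ⟨p, q⟩
      rw [triW_mk, triWbase_inl_sub, triWbase_inr, if_pos rfl, add_zero]
    rw [Finset.sum_congr rfl (fun pq _ => hterm pq)]
    have hmaps : ∀ pq ∈ P2, s(pq.1, pq.2) ∈ M.filter (fun e => InPT G w e) := by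
      rintro ⟨p, q⟩ hpq
      simp only [hP2, Finset.mem_filter, Finset.mem_univ, true_and] at hpq
      exact Finset.mem_filter.2 ⟨hpq.1, hpq.2⟩
    rw [← Finset.sum_fiberwise_of_maps_to hmaps (fun pq => halfW G w pq.1 pq.2)]
    apply Finset.sum_congr rfl
    intro e he
    obtain ⟨heM, heI⟩ := Finset.mem_filter.1 he
    induction e using Sym2.ind with
    | _ a b =>
      have hab : a ≠ b := heI.ne
      have hfiber : P2.filter (fun pq => s(pq.1, pq.2) = s(a, b)) =
          {(a, b), (b, a)} := by
        ext ⟨x, y⟩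
        simp only [hP2, Finset.mem_filter, Finset.mem_univ, true_and,
          Finset.mem_insert, Finset.mem_singleton, Prod.mk.injEq]
        constructor
        · rintro ⟨-, heq⟩
          rw [Sym2.eq_iff] at heq
          tauto
        · rintro (⟨rfl, rfl⟩ | ⟨rfl, rfl⟩)
          · exact ⟨⟨heM, heI⟩, rfl⟩
          · refine ⟨⟨?_, ?_⟩, Sym2.eq_swap⟩
            · rwa [Sym2.eq_swap]
            · rwa [Sym2.eq_swap]
      rw [hfiber, Finset.sum_pair (by simp [hab])]
      exact halfW_add heI
  rw [hCzero, hAsum, hBsum, add_zero]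
  rw [add_comm, Finset.sum_filter_add_sum_filter_not]

end MyWeight

section MyDegrees

variable {V : Type*} [Fintype V] [DecidableEq V] [Nonempty V]
  {G : SimpleGraph V} [DecidableRel G.Adj] {w : Sym2 V → ℝ} {M : Finset (Sym2 V)}

/-- The unique problematic triangle through a vertex. -/
lemma PT_eq (hsub : ∀ v : V, G.degree v ≤ 3) {t t' : Finset V}
    (ht : ProblemTri G w t) (ht' : ProblemTri G w t') {d : V}
    (hd : d ∈ t) (hd' : d ∈ t') : t = t' := by
  by_contra hne
  exact problemTri_disjoint hsub ht ht' hne hd hd'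

noncomputable def projV (V : Type*) [Nonempty V] : V ⊕ NV V → V
  | Sum.inl x => x
  | Sum.inr (NV.sub _ q) => q
  | Sum.inr _ => Classical.arbitrary V

@[simp] lemma projV_inl (x : V) : projV V (Sum.inl x) = x := rfl
@[simp] lemma projV_sub (p q : V) : projV V (Sum.inr (NV.sub p q)) = q := rfl

lemma deg_inl (x : V) :
    degIn (auxM G w M) (Sum.inl x : V ⊕ NV V) ≤ degIn M x := by
  unfold degIn
  apply Finset.card_le_card_of_injOn (Sym2.map (projV V))
  · intro e he
    simp only [Finset.mem_coe, Finset.coe_filter, Set.mem_setOf_eq, Finset.mem_filter] at he ⊢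
    obtain ⟨heM, hex⟩ := he
    rcases (mem_auxM G w M).1 heM with ⟨a, b, hm, _, rfl⟩ | ⟨p, q, hm, _, rfl⟩ | hrest
    · simp only [Sym2.mem_iff] at hex
      simp only [Sym2.map_pair_eq, projV_inl, Sym2.mem_iff]
      rcases hex with h | h
      · exact ⟨hm, Or.inl (Sum.inl_injective h)⟩
      · exact ⟨hm, Or.inr (Sum.inl_injective h)⟩
    · simp only [Sym2.mem_iff] at hex
      rcases hex with h | h
      · obtain rfl := Sum.inl_injective h
        simp only [Sym2.map_pair_eq, projV_inl, projV_sub, Sym2.mem_iff]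
        exact ⟨hm, by simp⟩
      · exact absurd h (by simp)
    · obtain ⟨n, m, rfl⟩ := rest_shape G w M hrest
      simp only [Sym2.mem_iff] at hex
      rcases hex with h | h <;> exact absurd h (by simp)
  · intro e1 he1 e2 he2 heq
    simp only [Finset.coe_filter, Set.mem_setOf_eq] at he1 he2
    obtain ⟨he1M, he1x⟩ := he1
    obtain ⟨he2M, he2x⟩ := he2
    have shape : ∀ e ∈ auxM G w M, (Sum.inl x : V ⊕ NV V) ∈ e →
        (∃ a b : V, ¬ InPT G w s(a, b) ∧ e = s(Sum.inl a, Sum.inl b)) ∨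
        (∃ q : V, InPT G w s(x, q) ∧ e = s(Sum.inl x, Sum.inr (NV.sub x q))) := by
      intro e heM hex
      rcases (mem_auxM G w M).1 heM with ⟨a, b, _, hn, rfl⟩ | ⟨p, q, _, hi, rfl⟩ | hrest
      · exact Or.inl ⟨a, b, hn, rfl⟩
      · simp only [Sym2.mem_iff] at hex
        rcases hex with h | h
        · obtain rfl := Sum.inl_injective h
          exact Or.inr ⟨q, hi, rfl⟩
        · exact absurd h (by simp)
      · obtain ⟨n, m, rfl⟩ := rest_shape G w M hrest
        simp only [Sym2.mem_iff] at hex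
        rcases hex with h | h <;> exact absurd h (by simp)
    rcases shape e1 he1M he1x with ⟨a, b, hn1, rfl⟩ | ⟨q, hi1, rfl⟩ <;>
      rcases shape e2 he2M he2x with ⟨c, d, hn2, rfl⟩ | ⟨q', hi2, rfl⟩
    · simp only [Sym2.map_pair_eq, projV_inl, Sym2.eq_iff] at heq
      rcases heq with ⟨rfl, rfl⟩ | ⟨rfl, rfl⟩
      · rfl
      · exact Sym2.eq_swap
    · simp only [Sym2.map_pair_eq, projV_inl, projV_sub] at heq
      exact absurd (heq ▸ hi2) hn1
    · simp only [Sym2.map_pair_eq, projV_inl, projV_sub] at heq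
      exact absurd (heq ▸ hi1) hn2
    · simp only [Sym2.map_pair_eq, projV_inl, projV_sub, Sym2.eq_iff] at heq
      rcases heq with ⟨-, rfl⟩ | ⟨h1, h2⟩
      · rfl
      · exact absurd h1 hi2.ne

end MyDegrees

section MyDegrees2

variable {V : Type*} [Fintype V] [DecidableEq V] [Nonempty V]
  {G : SimpleGraph V} [DecidableRel G.Adj] {w : Sym2 V → ℝ} {M : Finset (Sym2 V)}

lemma deg_sub (hsub : ∀ v : V, G.degree v ≤ 3) (hTF : TriangleFree G M)
    {p q : V} (h : InPT G w s(p, q)) :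
    degIn (auxM G w M) (Sum.inr (NV.sub p q) : V ⊕ NV V) = 1 := by
  obtain ⟨t, hpt, hmem⟩ := h
  obtain ⟨⟨hp, hq⟩, hpq⟩ := mem_triEdges_mk.1 hmem
  obtain ⟨haT, haM⟩ := apexM_spec hpt.1 hTF
  have hInPT : InPT G w s(p, q) := ⟨t, hpt, hmem⟩
  have classify : ∀ e ∈ auxM G w M, (Sum.inr (NV.sub p q) : V ⊕ NV V) ∈ e →
      (s(p, q) ∈ M ∧ e = s(Sum.inl p, Sum.inr (NV.sub p q))) ∨
      (s(p, q) ∉ M ∧ apexM M t = p ∧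
        e = s(Sum.inr (NV.sub p q), Sum.inr (NV.sub q p))) ∨
      (s(p, q) ∉ M ∧ apexM M t = q ∧
        e = s(Sum.inr (NV.sub q p), Sum.inr (NV.sub p q))) ∨
      (p ≠ apexM M t ∧ q ≠ apexM M t ∧
        e = s(Sum.inr (NV.glob p), Sum.inr (NV.sub p q))) := by
    intro e heM hin
    rcases (mem_auxM G w M).1 heM with ⟨x, y, hm', hn', rfl⟩ | ⟨p', q', hm', hi', rfl⟩ |
      ⟨t', r, hpt', hr, hrne, hnm', rfl⟩ | ⟨t', p', q', hpt', hp', hq', hne', hpa', hqa', rfl⟩ |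
      ⟨t', hpt', rfl⟩
    · exact absurd hin (by simp)
    · simp only [Sym2.mem_iff, Sum.inr.injEq, NV.sub.injEq] at hin
      rcases hin with hin | ⟨h1, h2⟩
      · exact absurd hin (by simp)
      · subst h1; subst h2
        exact Or.inl ⟨hm', rfl⟩
    · obtain ⟨ha'T, _⟩ := apexM_spec hpt'.1 hTF
      simp only [Sym2.mem_iff, Sum.inr.injEq, NV.sub.injEq] at hin
      rcases hin with ⟨h1, h2⟩ | ⟨h1, h2⟩
      · -- p = apexM M t', q = r
        have hpt'mem : p ∈ t' := by rw [h1]; exact ha'T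
        have htt : t' = t := PT_eq hsub hpt' hpt hpt'mem hp
        subst htt
        subst h2
        refine Or.inr (Or.inl ⟨?_, h1.symm, ?_⟩)
        · rw [h1]; exact hnm'
        · rw [← h1]
      · -- p = r, q = apexM M t'
        obtain rfl := h1
        have htt : t' = t := PT_eq hsub hpt' hpt hr hp
        subst htt
        refine Or.inr (Or.inr (Or.inl ⟨?_, h2.symm, ?_⟩))
        · rw [h2, Sym2.eq_swap]; exact hnm'
        · rw [← h2]
    · simp only [Sym2.mem_iff, Sum.inr.injEq, NV.sub.injEq] at hin
      rcases hin with hin | ⟨h1, h2⟩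
      · exact absurd hin (by simp)
      · obtain rfl := h1.symm
        obtain rfl := h2.symm
        have htt : t' = t := PT_eq hsub hpt' hpt hp' hp
        subst htt
        exact Or.inr (Or.inr (Or.inr ⟨hpa', hqa', rfl⟩))
    · exact absurd hin (by simp)
  unfold degIn
  by_cases hm : s(p, q) ∈ M
  · have hapq : apexM M t = p ∨ apexM M t = q := by
      have := haM s(p, q) (Finset.mem_inter.2 ⟨hm, hmem⟩)
      rwa [Sym2.mem_iff] at this
    have hone : ∀ e ∈ auxM G w M, (Sum.inr (NV.sub p q) : V ⊕ NV V) ∈ e →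
        e = s(Sum.inl p, Sum.inr (NV.sub p q)) := by
      intro e heM hin
      rcases classify e heM hin with ⟨_, rfl⟩ | ⟨hn, _, _⟩ | ⟨hn, _, _⟩ | ⟨hpa, hqa, _⟩
      · rfl
      · exact absurd hm hn
      · exact absurd hm hn
      · rcases hapq with h | h
        exacts [absurd h.symm hpa, absurd h.symm hqa]
    refine le_antisymm (Finset.card_le_one.2 ?_) (Finset.one_le_card.2 ⟨s(Sum.inl p, Sum.inr (NV.sub p q)), ?_⟩)
    · intro e1 h1 e2 h2
      simp only [Finset.mem_filter] at h1 h2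
      rw [hone e1 h1.1 h1.2, hone e2 h2.1 h2.2]
    · simp only [Finset.mem_filter]
      exact ⟨(mem_auxM G w M).2 (Or.inr (Or.inl ⟨p, q, hm, hInPT, rfl⟩)), by simp⟩
  · by_cases hap : apexM M t = p
    · have hone : ∀ e ∈ auxM G w M, (Sum.inr (NV.sub p q) : V ⊕ NV V) ∈ e →
          e = s(Sum.inr (NV.sub p q), Sum.inr (NV.sub q p)) := by
        intro e heM hin
        rcases classify e heM hin with ⟨hmm, _⟩ | ⟨_, _, rfl⟩ | ⟨_, hq', _⟩ | ⟨hpa, _, _⟩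
        · exact absurd hmm hm
        · rfl
        · exact absurd (hap.symm.trans hq') hpq
        · exact absurd hap.symm hpa
      refine le_antisymm (Finset.card_le_one.2 ?_) (Finset.one_le_card.2 ⟨s(Sum.inr (NV.sub p q), Sum.inr (NV.sub q p)), ?_⟩)
      · intro e1 h1 e2 h2
        simp only [Finset.mem_filter] at h1 h2
        rw [hone e1 h1.1 h1.2, hone e2 h2.1 h2.2]
      · simp only [Finset.mem_filter]
        refine ⟨(mem_auxM G w M).2 (Or.inr (Or.inr (Or.inl
          ⟨t, q, hpt, hq, ?_, ?_, ?_⟩))), by simp⟩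
        · rw [hap]; exact hpq.symm
        · rw [hap]; exact hm
        · rw [hap]
    · by_cases haq : apexM M t = q
      · have hone : ∀ e ∈ auxM G w M, (Sum.inr (NV.sub p q) : V ⊕ NV V) ∈ e →
            e = s(Sum.inr (NV.sub q p), Sum.inr (NV.sub p q)) := by
          intro e heM hin
          rcases classify e heM hin with ⟨hmm, _⟩ | ⟨_, hp', _⟩ | ⟨_, _, rfl⟩ | ⟨_, hqa, _⟩
          · exact absurd hmm hm
          · exact absurd (haq.symm.trans hp') hpq.symm
          · rfl
          · exact absurd haq.symm hqa
        refine le_antisymm (Finset.card_le_one.2 ?_) (Finset.one_le_card.2 ⟨s(Sum.inr (NV.sub q p), Sum.inr (NV.sub p q)), ?_⟩)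
        · intro e1 h1 e2 h2
          simp only [Finset.mem_filter] at h1 h2
          rw [hone e1 h1.1 h1.2, hone e2 h2.1 h2.2]
        · simp only [Finset.mem_filter]
          refine ⟨(mem_auxM G w M).2 (Or.inr (Or.inr (Or.inl
            ⟨t, p, hpt, hp, ?_, ?_, ?_⟩))), by simp⟩
          · rw [haq]; exact hpq
          · rw [haq, Sym2.eq_swap]; exact hm
          · rw [haq]
      · have hone : ∀ e ∈ auxM G w M, (Sum.inr (NV.sub p q) : V ⊕ NV V) ∈ e →
            e = s(Sum.inr (NV.glob p), Sum.inr (NV.sub p q)) := by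
          intro e heM hin
          rcases classify e heM hin with ⟨hmm, _⟩ | ⟨_, hp', _⟩ | ⟨_, hq', _⟩ | ⟨_, _, rfl⟩
          · exact absurd hmm hm
          · exact absurd hp' hap
          · exact absurd hq' haq
          · rfl
        refine le_antisymm (Finset.card_le_one.2 ?_) (Finset.one_le_card.2 ⟨s(Sum.inr (NV.glob p), Sum.inr (NV.sub p q)), ?_⟩)
        · intro e1 h1 e2 h2
          simp only [Finset.mem_filter] at h1 h2
          rw [hone e1 h1.1 h1.2, hone e2 h2.1 h2.2]
        · simp only [Finset.mem_filter]
          exact ⟨(mem_auxM G w M).2 (Or.inr (Or.inr (Or.inr (Or.inl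
            ⟨t, p, q, hpt, hp, hq, hpq, fun hc => hap hc.symm,
              fun hc => haq hc.symm, rfl⟩)))), by simp⟩

lemma deg_glob (hsub : ∀ v : V, G.degree v ≤ 3) (hTF : TriangleFree G M)
    {t : Finset V} {d : V} (hpt : ProblemTri G w t) (hd : d ∈ t) :
    degIn (auxM G w M) (Sum.inr (NV.glob d) : V ⊕ NV V) = 1 := by
  obtain ⟨haT, haM⟩ := apexM_spec hpt.1 hTF
  have classify : ∀ e ∈ auxM G w M, (Sum.inr (NV.glob d) : V ⊕ NV V) ∈ e →
      (∃ q0 : V, q0 ∈ t ∧ d ≠ q0 ∧ q0 ≠ apexM M t ∧ d ≠ apexM M t ∧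
        e = s(Sum.inr (NV.glob d), Sum.inr (NV.sub d q0))) ∨
      (d = apexM M t ∧ e = s(Sum.inr (NV.glob d), Sum.inr (NV.globT t))) := by
    intro e heM hin
    rcases (mem_auxM G w M).1 heM with ⟨x, y, _, _, rfl⟩ | ⟨p', q', _, _, rfl⟩ |
      ⟨t', r, hpt', hr, hrne, hnm', rfl⟩ | ⟨t', p', q', hpt', hp', hq', hne', hpa', hqa', rfl⟩ |
      ⟨t', hpt', rfl⟩
    · exact absurd hin (by simp)
    · exact absurd hin (by simp)
    · exact absurd hin (by simp)
    · simp only [Sym2.mem_iff, Sum.inr.injEq, NV.glob.injEq] at hin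
      rcases hin with h1 | h1
      · obtain rfl := h1.symm
        have htt : t' = t := PT_eq hsub hpt' hpt hp' hd
        subst htt
        exact Or.inl ⟨q', hq', hne', hqa', hpa', rfl⟩
      · exact absurd h1 (by simp)
    · obtain ⟨ha'T, _⟩ := apexM_spec hpt'.1 hTF
      simp only [Sym2.mem_iff, Sum.inr.injEq, NV.glob.injEq] at hin
      rcases hin with h1 | h1
      · have hdt' : d ∈ t' := by rw [h1]; exact ha'T
        have htt : t' = t := PT_eq hsub hpt' hpt hdt' hd
        subst htt
        exact Or.inr ⟨h1, by rw [h1]⟩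
      · exact absurd h1 (by simp)
  unfold degIn
  by_cases hda : d = apexM M t
  · have hone : ∀ e ∈ auxM G w M, (Sum.inr (NV.glob d) : V ⊕ NV V) ∈ e →
        e = s(Sum.inr (NV.glob d), Sum.inr (NV.globT t)) := by
      intro e heM hin
      rcases classify e heM hin with ⟨q0, _, _, _, hda', _⟩ | ⟨_, rfl⟩
      · exact absurd hda hda'
      · rfl
    refine le_antisymm (Finset.card_le_one.2 ?_) (Finset.one_le_card.2
      ⟨s(Sum.inr (NV.glob d), Sum.inr (NV.globT t)), ?_⟩)
    · intro e1 h1 e2 h2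
      simp only [Finset.mem_filter] at h1 h2
      rw [hone e1 h1.1 h1.2, hone e2 h2.1 h2.2]
    · simp only [Finset.mem_filter]
      refine ⟨(mem_auxM G w M).2 (Or.inr (Or.inr (Or.inr (Or.inr ⟨t, hpt, ?_⟩)))), by simp⟩
      rw [← hda]
  · obtain ⟨q0, ⟨hq0t, hq0d, hq0a⟩, huniq⟩ := third_exists hpt.1 hd haT hda
    have hone : ∀ e ∈ auxM G w M, (Sum.inr (NV.glob d) : V ⊕ NV V) ∈ e →
        e = s(Sum.inr (NV.glob d), Sum.inr (NV.sub d q0)) := by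
      intro e heM hin
      rcases classify e heM hin with ⟨q0', hq0't, hdq0', hq0'a, _, rfl⟩ | ⟨hda', _⟩
      · rw [huniq q0' ⟨hq0't, fun hc => hdq0' hc.symm, hq0'a⟩]
      · exact absurd hda' hda
    refine le_antisymm (Finset.card_le_one.2 ?_) (Finset.one_le_card.2 ⟨s(Sum.inr (NV.glob d), Sum.inr (NV.sub d q0)), ?_⟩)
    · intro e1 h1 e2 h2
      simp only [Finset.mem_filter] at h1 h2
      rw [hone e1 h1.1 h1.2, hone e2 h2.1 h2.2]
    · simp only [Finset.mem_filter]
      exact ⟨(mem_auxM G w M).2 (Or.inr (Or.inr (Or.inr (Or.inl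
        ⟨t, d, q0, hpt, hd, hq0t, fun hc => hq0d hc.symm, hda, hq0a, rfl⟩)))), by simp⟩

lemma deg_globT (hTF : TriangleFree G M) {t : Finset V} (hpt : ProblemTri G w t) :
    degIn (auxM G w M) (Sum.inr (NV.globT t) : V ⊕ NV V) = 1 := by
  have hone : ∀ e ∈ auxM G w M, (Sum.inr (NV.globT t) : V ⊕ NV V) ∈ e →
      e = s(Sum.inr (NV.glob (apexM M t)), Sum.inr (NV.globT t)) := by
    intro e heM hin
    rcases (mem_auxM G w M).1 heM with ⟨x, y, _, _, rfl⟩ | ⟨p', q', _, _, rfl⟩ |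
      ⟨t', r, _, _, _, _, rfl⟩ | ⟨t', p', q', _, _, _, _, _, _, rfl⟩ | ⟨t', hpt', rfl⟩
    · exact absurd hin (by simp)
    · exact absurd hin (by simp)
    · exact absurd hin (by simp)
    · exact absurd hin (by simp)
    · simp only [Sym2.mem_iff, Sum.inr.injEq, NV.globT.injEq] at hin
      rcases hin with h1 | h1
      · exact absurd h1 (by simp)
      · rw [h1]
  unfold degIn
  refine le_antisymm (Finset.card_le_one.2 ?_) (Finset.one_le_card.2
    ⟨s(Sum.inr (NV.glob (apexM M t)), Sum.inr (NV.globT t)), ?_⟩)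
  · intro e1 h1 e2 h2
    simp only [Finset.mem_filter] at h1 h2
    rw [hone e1 h1.1 h1.2, hone e2 h2.1 h2.2]
  · simp only [Finset.mem_filter]
    exact ⟨(mem_auxM G w M).2 (Or.inr (Or.inr (Or.inr (Or.inr ⟨t, hpt, rfl⟩)))), by simp⟩

end MyDegrees2

section MyEdges

variable {V : Type*} [Fintype V] [DecidableEq V] [Nonempty V]
  {G : SimpleGraph V} [DecidableRel G.Adj] {w : Sym2 V → ℝ} {M : Finset (Sym2 V)}

lemma auxM_edges (hM : Is2Matching G M) (hTF : TriangleFree G M) :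
    ∀ e ∈ auxM G w M, e ∈ (triAuxG G w).edgeSet := by
  intro e heM
  rcases (mem_auxM G w M).1 heM with ⟨x, y, hm, hn, rfl⟩ | ⟨p, q, hm, hi, rfl⟩ |
    ⟨t, r, hpt, hr, hrne, hnm, rfl⟩ | ⟨t, p, q, hpt, hp, hq, hne, hpa, hqa, rfl⟩ |
    ⟨t, hpt, rfl⟩
  · have hadj : G.Adj x y := (SimpleGraph.mem_edgeSet G).1 (hM.1 _ hm)
    rw [SimpleGraph.mem_edgeSet, triAuxG, SimpleGraph.fromRel_adj]
    exact ⟨by simpa using hadj.ne, Or.inl ⟨hadj, hn⟩⟩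
  · rw [SimpleGraph.mem_edgeSet, triAuxG, SimpleGraph.fromRel_adj]
    exact ⟨by simp, Or.inl ⟨rfl, hi⟩⟩
  · obtain ⟨haT, _⟩ := apexM_spec hpt.1 hTF
    rw [SimpleGraph.mem_edgeSet, triAuxG, SimpleGraph.fromRel_adj]
    refine ⟨by simp [hrne.symm, hrne], Or.inl ?_⟩
    rw [triRel_sub_sub]
    exact ⟨rfl, rfl, InPT_of_mem hpt haT hr (Ne.symm hrne)⟩
  · rw [SimpleGraph.mem_edgeSet, triAuxG, SimpleGraph.fromRel_adj]
    refine ⟨by simp, Or.inl ?_⟩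
    rw [triRel_glob_sub]
    exact ⟨rfl, InPT_of_mem hpt hp hq hne⟩
  · obtain ⟨haT, _⟩ := apexM_spec hpt.1 hTF
    rw [SimpleGraph.mem_edgeSet, triAuxG, SimpleGraph.fromRel_adj]
    refine ⟨by simp, Or.inl ?_⟩
    rw [triRel_glob_globT]
    exact ⟨hpt, haT⟩

end MyEdges


/-- For every triangle-free 2-matching `M` of `G` there is an
`(l,u)`-matching `M'` of the auxiliary graph `G'` with `w'(M') = w(M)`. -/
theorem triangle_free_to_lu_matching {V : Type*} [Fintype V] [DecidableEq V]
    (G : SimpleGraph V) [DecidableRel G.Adj]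
    (hsub : ∀ v : V, G.degree v ≤ 3) (hK4 : ¬ HasK4Component G)
    (w : Sym2 V → ℝ) (hw : ∀ e, 0 ≤ w e)
    (M : Finset (Sym2 V)) (hM : Is2Matching G M) (hTF : TriangleFree G M) :
    ∃ M' : Finset (Sym2 (V ⊕ NV V)), TriLU G w M' ∧
      ∑ e ∈ M', triW G w e = ∑ e ∈ M, w e := by
  rcases isEmpty_or_nonempty V with hV | hV
  · refine ⟨∅, ⟨fun e he => absurd he (by simp), fun v hv => ?_⟩, ?_⟩
    · exfalso
      cases v with
      | inl x => exact hV.false x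
      | inr n =>
        cases n with
        | sub p q => exact hV.false p
        | glob d => exact hV.false d
        | globT t =>
          have h3 : t.card = 3 := hv.1.1
          have hne : t.Nonempty := Finset.card_pos.1 (by omega)
          exact hV.false hne.choose
    · have hM0 : M = ∅ := by
        apply Finset.eq_empty_of_forall_notMem
        intro e he
        induction e using Sym2.ind with
        | _ x y => exact hV.false x
      simp [hM0]
  · refine ⟨auxM G w M, ⟨auxM_edges hM hTF, fun v hv => ?_⟩, auxM_weight G w M⟩
    cases v with
    | inl x =>
      exact ⟨Nat.zero_le _, le_trans (deg_inl x) (hM.2 x)⟩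
    | inr n =>
      cases n with
      | sub p q =>
        have h1 := deg_sub hsub hTF (hv : InPT G w s(p, q))
        exact ⟨h1.ge, h1.le⟩
      | glob d =>
        obtain ⟨t, hpt, hd⟩ := hv
        have h1 := deg_glob hsub hTF hpt hd
        exact ⟨h1.ge, h1.le⟩
      | globT t =>
        have h1 := deg_globT hTF (hv : ProblemTri G w t)
        exact ⟨h1.ge, h1.le⟩

end Paper
end

section
/- Let t=(a,b,c) be a problematic triangle of G and let M' be an (l,u)-matching of the auxiliary graph G'. Then exactly two of the global vertices u_a, u_b, u_c are matched in M' to subdivision vertices of t, and these two subdivision vertices are adjacent to two distinct vertices of t. In particular, if M' contains exactly four of the six half-edges of t, then the two half-edges of t that do not belong to M' are not incident to the same vertex of t. -/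
/-!
Every gadget vertex has capacity exactly one. In a subcubic graph problematic triangles are
vertex-disjoint, so the only neighbours of `u_d` are `u_t` and the subdivision vertices `v^d_q`
of `t`; as `u_t` is matched to exactly one `u_{d₀}`, the other two global vertices are matched
to subdivision vertices, which lie at their own vertex of `t`. If both half-edges at `p` were
missing, then for `q ≠ p` the vertex `v^q_p` would be saturated by its half-edge, forcing both
`v^p_q` to be matched to `u_p`, which has capacity one.
-/

open Finset
open scoped Classical

namespace Paper

variable {V : Type*}

section TriangleGadget

theorem mk_mem_triEdges_iff [DecidableEq V] {t : Finset V} {x y : V} :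
    s(x, y) ∈ triEdges t ↔ x ∈ t ∧ y ∈ t ∧ x ≠ y := by
  simp [triEdges, and_assoc]

theorem exists_mk_mem_of_degIn_eq_one {W : Type*} {M : Finset (Sym2 W)} {v : W}
    (h : degIn M v = 1) : ∃ u, s(v, u) ∈ M := by
  obtain ⟨e, he⟩ := Finset.card_pos.mp (h ▸ Nat.one_pos : 0 < degIn M v)
  obtain ⟨heM, hve⟩ := Finset.mem_filter.mp he
  obtain ⟨u, rfl⟩ := Sym2.mem_iff_exists.mp hve
  exact ⟨u, heM⟩

theorem eq_of_mk_mem_of_degIn_le_one {W : Type*} {M : Finset (Sym2 W)} {v u u' : W}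
    (h : degIn M v ≤ 1) (hu : s(v, u) ∈ M) (hu' : s(v, u') ∈ M) : u = u' :=
  Sym2.congr_right.mp <| Finset.card_le_one.mp h _
    (Finset.mem_filter.mpr ⟨hu, Sym2.mem_mk_left _ _⟩) _
    (Finset.mem_filter.mpr ⟨hu', Sym2.mem_mk_left _ _⟩)

theorem mem_filter_of_card_filter_add_two_eq_card {α : Type*} {s : Finset α}
    {P : α → Prop} [DecidablePred P] (hcard : (s.filter P).card + 2 = s.card)
    {x y z : α} (hx : x ∈ s) (hy : y ∈ s) (hz : z ∈ s) (hxy : x ≠ y) (hzx : z ≠ x)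
    (hzy : z ≠ y) (hPx : ¬ P x) (hPy : ¬ P y) : P z := by
  by_contra hPz
  have hsub : ({x, y, z} : Finset α) ⊆ s.filter (fun a => ¬ P a) := by
    intro a ha
    simp only [Finset.mem_insert, Finset.mem_singleton] at ha
    rcases ha with rfl | rfl | rfl <;> simp [*]
  have h3 : ({x, y, z} : Finset α).card = 3 := by
    rw [Finset.card_insert_of_notMem (by simp [hxy, hzx.symm]),
      Finset.card_pair (Ne.symm hzy)]
  have := Finset.card_le_card hsub
  have := Finset.card_filter_add_card_filter_not (s := s) P
  omega

variable [DecidableEq V] {G : SimpleGraph V} {w : Sym2 V → ℝ}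

theorem ProblemTri.eq_of_mem_triEdges {t t' : Finset V} (ht : ProblemTri G w t)
    (ht' : ProblemTri G w t') {e : Sym2 V} (he : e ∈ triEdges t) (he' : e ∈ triEdges t') :
    t = t' := by
  by_contra hne
  rcases le_total (∑ e ∈ triEdges t, w e) (∑ e ∈ triEdges t', w e) with h | h
  · exact ht.2 ⟨t', ht'.1, Ne.symm hne, ⟨e, Finset.mem_inter.mpr ⟨he, he'⟩⟩, h⟩
  · exact ht'.2 ⟨t, ht.1, hne, ⟨e, Finset.mem_inter.mpr ⟨he', he⟩⟩, h⟩

/-- Two problematic triangles through `d` share an edge, as otherwise `d` would have four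
neighbours. -/
theorem ProblemTri.eq_of_mem [Fintype V] [DecidableRel G.Adj]
    (hsub : ∀ v : V, G.degree v ≤ 3) {t t' : Finset V} (ht : ProblemTri G w t)
    (ht' : ProblemTri G w t') {d : V} (hd : d ∈ t) (hd' : d ∈ t') : t = t' := by
  by_cases hx : ∃ x ∈ t, x ∈ t' ∧ x ≠ d
  · obtain ⟨x, hx, hx', hxd⟩ := hx
    exact ht.eq_of_mem_triEdges ht' (mk_mem_triEdges_iff.mpr ⟨hd, hx, hxd.symm⟩)
      (mk_mem_triEdges_iff.mpr ⟨hd', hx', hxd.symm⟩)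
  · push Not at hx
    have hinter : t ∩ t' = {d} := by
      ext x
      simp only [Finset.mem_inter, Finset.mem_singleton]
      exact ⟨fun ⟨h, h'⟩ => hx x h h', by rintro rfl; exact ⟨hd, hd'⟩⟩
    have hunion : (t ∪ t').card = 5 := by
      have := Finset.card_union_add_card_inter t t'
      rw [hinter, ht.1.1, ht'.1.1, Finset.card_singleton] at this
      omega
    have hnbrs : (t ∪ t').erase d ⊆ G.neighborFinset d := by
      intro x hx
      obtain ⟨hxd, hx⟩ := Finset.mem_erase.mp hx
      rw [SimpleGraph.mem_neighborFinset]
      rcases Finset.mem_union.mp hx with hx | hx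
      · exact ht.1.2 d hd x hx hxd.symm
      · exact ht'.1.2 d hd' x hx hxd.symm
    have := Finset.card_le_card hnbrs
    rw [Finset.card_erase_of_mem (Finset.mem_union_left _ hd), hunion,
      SimpleGraph.card_neighborFinset_eq_degree] at this
    linarith [hsub d]

variable (G w)

theorem triAuxG_adj_globT {t : Finset V} {z : V ⊕ NV V}
    (h : (triAuxG G w).Adj (.inr (.globT t)) z) : ∃ d ∈ t, z = .inr (.glob d) := by
  rcases z with z | (⟨p, q⟩ | d | t') <;> simp [triAuxG, triRel] at h
  exact ⟨d, h.2, rfl⟩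

theorem triAuxG_adj_glob_sub {d p q : V}
    (h : (triAuxG G w).Adj (.inr (.glob d)) (.inr (.sub p q))) : d = p :=
  h.2.elim And.left False.elim

theorem triAuxG_adj_sub {p q : V} {z : V ⊕ NV V}
    (h : (triAuxG G w).Adj (.inr (.sub p q)) z) :
    z = .inl p ∨ z = .inr (.sub q p) ∨ z = .inr (.glob p) := by
  rcases z with z | (⟨p', q'⟩ | d | t') <;> simp [triAuxG, triRel] at h ⊢ <;> grind

theorem triAuxG_adj_glob [Fintype V] [DecidableRel G.Adj] (hsub : ∀ v : V, G.degree v ≤ 3)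
    {t : Finset V} (ht : ProblemTri G w t) {d : V} (hd : d ∈ t) {z : V ⊕ NV V}
    (h : (triAuxG G w).Adj (.inr (.glob d)) z) :
    (∃ q ∈ t, z = .inr (.sub d q)) ∨ z = .inr (.globT t) := by
  rcases z with z | (⟨p, q⟩ | d' | t') <;> simp [triAuxG, triRel] at h
  · obtain ⟨rfl, t', ht', hpq⟩ := h
    obtain ⟨hp, hq, -⟩ := mk_mem_triEdges_iff.mp hpq
    obtain rfl := ht'.eq_of_mem hsub ht hp hd
    exact .inl ⟨q, hq, rfl⟩
  · obtain rfl := h.1.eq_of_mem hsub ht h.2 hd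
    exact .inr rfl

variable {G w} {M : Finset (Sym2 (V ⊕ NV V))}

theorem TriLU.adj (hM : TriLU G w M) {x y : V ⊕ NV V} (h : s(x, y) ∈ M) :
    (triAuxG G w).Adj x y :=
  hM.1 _ h

theorem TriLU.degIn_eq_one (hM : TriLU G w M) {x : NV V} (hx : triMeaning G w (.inr x)) :
    degIn M (.inr x) = 1 :=
  le_antisymm (hM.2 _ hx).2 (hM.2 _ hx).1

theorem TriLU.exists_sub_mem_iff [Fintype V] [DecidableRel G.Adj]
    (hsub : ∀ v : V, G.degree v ≤ 3) (hM : TriLU G w M) {t : Finset V}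
    (ht : ProblemTri G w t) {d₀ d : V} (hd₀ : s(.inr (.globT t), .inr (.glob d₀)) ∈ M)
    (hd : d ∈ t) :
    (∃ p ∈ t, ∃ q ∈ t, s(.inr (.glob d), .inr (.sub p q)) ∈ M) ↔ d ≠ d₀ := by
  have hdeg_d := hM.degIn_eq_one (x := .glob d) ⟨t, ht, hd⟩
  constructor
  · rintro ⟨p, -, q, -, hpq⟩ rfl
    have := eq_of_mk_mem_of_degIn_le_one hdeg_d.le hpq (Sym2.eq_swap ▸ hd₀)
    simp at this
  · intro hne
    obtain ⟨z, hz⟩ := exists_mk_mem_of_degIn_eq_one hdeg_d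
    rcases triAuxG_adj_glob G w hsub ht hd (hM.adj hz) with ⟨q, hq, rfl⟩ | rfl
    · exact ⟨d, hd, q, hq, hz⟩
    · have := eq_of_mk_mem_of_degIn_le_one (hM.degIn_eq_one (x := .globT t) ht).le
        (Sym2.eq_swap ▸ hz) hd₀
      simp [hne] at this

/-- `v^p_q` cannot use the eliminator, since `v^q_p` is saturated by its own half-edge. -/
theorem TriLU.glob_sub_mem (hM : TriLU G w M) {p q : V} (hpq : InPT G w s(p, q))
    (hp : s(.inl p, .inr (.sub p q)) ∉ M) (hq : s(.inl q, .inr (.sub q p)) ∈ M) :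
    s(.inr (.glob p), .inr (.sub p q)) ∈ M := by
  obtain ⟨z, hz⟩ := exists_mk_mem_of_degIn_eq_one (hM.degIn_eq_one (x := .sub p q) hpq)
  rcases triAuxG_adj_sub G w (hM.adj hz) with rfl | rfl | rfl
  · exact absurd (Sym2.eq_swap ▸ hz) hp
  · have hqp : triMeaning G w (.inr (.sub q p)) := by
      simpa only [triMeaning, Sym2.eq_swap] using hpq
    have := eq_of_mk_mem_of_degIn_le_one (hM.degIn_eq_one hqp).le
      (Sym2.eq_swap ▸ hq) (Sym2.eq_swap ▸ hz)
    simp at this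
  · exact Sym2.eq_swap ▸ hz

end TriangleGadget

theorem lu_matching_on_triangle_gadget_general {V : Type*} [Fintype V] [DecidableEq V]
    (G : SimpleGraph V) [DecidableRel G.Adj]
    (hsub : ∀ v : V, G.degree v ≤ 3)
    (w : Sym2 V → ℝ)
    (a b c : V)
    (hpt : ProblemTri G w {a, b, c})
    (M' : Finset (Sym2 (V ⊕ NV V))) (hM' : TriLU G w M') :
    ((({a, b, c} : Finset V)).filter (fun d =>
        ∃ p ∈ ({a, b, c} : Finset V), ∃ q ∈ ({a, b, c} : Finset V),
          s(Sum.inr (NV.glob d), Sum.inr (NV.sub p q)) ∈ M')).card = 2 ∧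
    (∀ d₁ ∈ ({a, b, c} : Finset V), ∀ d₂ ∈ ({a, b, c} : Finset V), d₁ ≠ d₂ →
      ∀ p₁ q₁ p₂ q₂ : V,
        p₁ ∈ ({a, b, c} : Finset V) → q₁ ∈ ({a, b, c} : Finset V) →
        p₂ ∈ ({a, b, c} : Finset V) → q₂ ∈ ({a, b, c} : Finset V) →
        s(Sum.inr (NV.glob d₁), Sum.inr (NV.sub p₁ q₁)) ∈ M' →
        s(Sum.inr (NV.glob d₂), Sum.inr (NV.sub p₂ q₂)) ∈ M' →
        p₁ ≠ p₂) ∧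
    (((({a, b, c} : Finset V).offDiag).filter (fun pq =>
        s(Sum.inl pq.1, Sum.inr (NV.sub pq.1 pq.2)) ∈ M')).card = 4 →
      ∀ pq₁ ∈ ({a, b, c} : Finset V).offDiag,
        ∀ pq₂ ∈ ({a, b, c} : Finset V).offDiag,
        s(Sum.inl pq₁.1, Sum.inr (NV.sub pq₁.1 pq₁.2)) ∉ M' →
        s(Sum.inl pq₂.1, Sum.inr (NV.sub pq₂.1 pq₂.2)) ∉ M' →
        pq₁ ≠ pq₂ → pq₁.1 ≠ pq₂.1) := by
  set t : Finset V := {a, b, c}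
  have hInPT {p q : V} (h : (p, q) ∈ t.offDiag) : InPT G w s(p, q) :=
    ⟨t, hpt, mk_mem_triEdges_iff.mpr (Finset.mem_offDiag.mp h)⟩
  have hswap {p q : V} (h : (p, q) ∈ t.offDiag) : (q, p) ∈ t.offDiag := by grind
  refine ⟨?_, ?_, ?_⟩
  · obtain ⟨z, hz⟩ := exists_mk_mem_of_degIn_eq_one (hM'.degIn_eq_one (x := .globT t) hpt)
    obtain ⟨d₀, hd₀, rfl⟩ := triAuxG_adj_globT G w (hM'.adj hz)
    rw [Finset.filter_congr fun d hd => hM'.exists_sub_mem_iff hsub hpt hz hd,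
      Finset.filter_ne', Finset.card_erase_of_mem hd₀, hpt.1.1]
  · intro d₁ _ d₂ _ hne p₁ q₁ p₂ q₂ _ _ _ _ h₁ h₂
    rwa [← triAuxG_adj_glob_sub G w (hM'.adj h₁), ← triAuxG_adj_glob_sub G w (hM'.adj h₂)]
  · rintro hcard ⟨p, q₁⟩ h₁ ⟨p', q₂⟩ h₂ hn₁ hn₂ hne (rfl : p = p')
    have hcard' : (t.offDiag.filter fun pq =>
        s(.inl pq.1, .inr (.sub pq.1 pq.2)) ∈ M').card + 2 = t.offDiag.card := by
      rw [hcard, Finset.offDiag_card, hpt.1.1]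
    have hhalf : ∀ q, (q, p) ∈ t.offDiag → s(.inl q, .inr (.sub q p)) ∈ M' := fun q hq =>
      mem_filter_of_card_filter_add_two_eq_card hcard' h₁ h₂ hq hne
        (by simp [(Finset.mem_offDiag.mp hq).2.2]) (by simp [(Finset.mem_offDiag.mp hq).2.2])
        hn₁ hn₂
    have hg₁ := hM'.glob_sub_mem (hInPT h₁) hn₁ (hhalf q₁ (hswap h₁))
    have hg₂ := hM'.glob_sub_mem (hInPT h₂) hn₂ (hhalf q₂ (hswap h₂))
    have := eq_of_mk_mem_of_degIn_le_one
      (hM'.degIn_eq_one (x := .glob p) ⟨t, hpt, (Finset.mem_offDiag.mp h₁).1⟩).le hg₁ hg₂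
    obtain rfl : q₁ = q₂ := by simpa using this
    exact hne rfl

/-- Let `t = (a,b,c)` be a problematic triangle of `G` and let
`M'` be an `(l,u)`-matching of the auxiliary graph `G'`. Then exactly two of
the global vertices `u_a, u_b, u_c` are matched in `M'` to subdivision
vertices of `t`, these two subdivision vertices are adjacent to two distinct
vertices of `t`, and if `M'` contains exactly four of the six half-edges of
`t` then the two missing half-edges are not incident to the same vertex of
`t`. (The six half-edges of `t` are indexed by the ordered pairs `(p, q)` of
distinct vertices of `t`, the half-edge of `(p, q)` incident to `p` being
`(p, v^p_q)`.) -/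
theorem lu_matching_on_triangle_gadget {V : Type*} [Fintype V] [DecidableEq V]
    (G : SimpleGraph V) [DecidableRel G.Adj]
    (hsub : ∀ v : V, G.degree v ≤ 3) (hK4 : ¬ HasK4Component G)
    (w : Sym2 V → ℝ) (hw : ∀ e, 0 ≤ w e)
    (a b c : V) (habc : a ≠ b ∧ a ≠ c ∧ b ≠ c)
    (hpt : ProblemTri G w {a, b, c})
    (M' : Finset (Sym2 (V ⊕ NV V))) (hM' : TriLU G w M') :
    ((({a, b, c} : Finset V)).filter (fun d =>
        ∃ p ∈ ({a, b, c} : Finset V), ∃ q ∈ ({a, b, c} : Finset V),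
          s(Sum.inr (NV.glob d), Sum.inr (NV.sub p q)) ∈ M')).card = 2 ∧
    (∀ d₁ ∈ ({a, b, c} : Finset V), ∀ d₂ ∈ ({a, b, c} : Finset V), d₁ ≠ d₂ →
      ∀ p₁ q₁ p₂ q₂ : V,
        p₁ ∈ ({a, b, c} : Finset V) → q₁ ∈ ({a, b, c} : Finset V) →
        p₂ ∈ ({a, b, c} : Finset V) → q₂ ∈ ({a, b, c} : Finset V) →
        s(Sum.inr (NV.glob d₁), Sum.inr (NV.sub p₁ q₁)) ∈ M' →
        s(Sum.inr (NV.glob d₂), Sum.inr (NV.sub p₂ q₂)) ∈ M' →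
        p₁ ≠ p₂) ∧
    (((({a, b, c} : Finset V).offDiag).filter (fun pq =>
        s(Sum.inl pq.1, Sum.inr (NV.sub pq.1 pq.2)) ∈ M')).card = 4 →
      ∀ pq₁ ∈ ({a, b, c} : Finset V).offDiag,
        ∀ pq₂ ∈ ({a, b, c} : Finset V).offDiag,
        s(Sum.inl pq₁.1, Sum.inr (NV.sub pq₁.1 pq₁.2)) ∉ M' →
        s(Sum.inl pq₂.1, Sum.inr (NV.sub pq₂.1 pq₂.2)) ∉ M' →
        pq₁ ≠ pq₂ → pq₁.1 ≠ pq₂.1) :=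
  lu_matching_on_triangle_gadget_general G hsub w a b c hpt M' hM'

end Paper
end

section
/- In a subcubic graph G, any two distinct squares are either vertex-disjoint or have exactly one or exactly two edges in common. -/
/-!
If a square contains the path `a - b - c - d` of another square, its fourth edge can only close
that path, so it is `da`: distinct squares share at most two edges. If they share no edge but
a vertex `v`, then `v` has two neighbours on each square, four in all, which subcubicity forbids.
-/

open Finset
open scoped Classical

namespace Paper

variable {V : Type*}

/-- `(a, b, c, d)` is a square (cycle of length 4) of `G`. -/
def IsSquare4 (G : SimpleGraph V) (a b c d : V) : Prop :=
  a ≠ b ∧ a ≠ c ∧ a ≠ d ∧ b ≠ c ∧ b ≠ d ∧ c ≠ d ∧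
  G.Adj a b ∧ G.Adj b c ∧ G.Adj c d ∧ G.Adj d a

/-- The four native edges of the square `(a, b, c, d)`. -/
def sqEdges [DecidableEq V] (a b c d : V) : Finset (Sym2 V) :=
  {s(a, b), s(b, c), s(c, d), s(d, a)}

/-- No square of `G` has all four of its native edges in `M`. -/
def SquareFree [DecidableEq V] (G : SimpleGraph V) (M : Finset (Sym2 V)) : Prop :=
  ∀ a b c d : V, IsSquare4 G a b c d → ¬ sqEdges a b c d ⊆ M

/-- The square `(a, b, c, d)` is unproblematic: there is another square `s'`
such that either they share exactly one edge, or they share two edges and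
`w(s) ≤ w(s')`. -/
def SqUnprob [DecidableEq V] (G : SimpleGraph V) (w : Sym2 V → ℝ) (a b c d : V) : Prop :=
  ∃ a' b' c' d' : V, IsSquare4 G a' b' c' d' ∧ sqEdges a' b' c' d' ≠ sqEdges a b c d ∧
    ((sqEdges a b c d ∩ sqEdges a' b' c' d').card = 1 ∨
     ((sqEdges a b c d ∩ sqEdges a' b' c' d').card = 2 ∧
       ∑ e ∈ sqEdges a b c d, w e ≤ ∑ e ∈ sqEdges a' b' c' d', w e))

/-- The square `(a, b, c, d)` is problematic. -/
def ProblemSq [DecidableEq V] (G : SimpleGraph V) (w : Sym2 V → ℝ) (a b c d : V) : Prop :=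
  IsSquare4 G a b c d ∧ ¬ SqUnprob G w a b c d

lemma IsSquare4.rotate {G : SimpleGraph V} {a b c d : V}
    (h : IsSquare4 G a b c d) : IsSquare4 G b c d a := by
  obtain ⟨hab, hac, had, hbc, hbd, hcd, eab, ebc, ecd, eda⟩ := h
  exact ⟨hbc, hbd, hab.symm, hcd, hac.symm, had.symm, ebc, ecd, eda, eab⟩

lemma sqEdges_rotate [DecidableEq V] (a b c d : V) : sqEdges b c d a = sqEdges a b c d := by
  ext e
  simp only [sqEdges, mem_insert, mem_singleton]
  tauto

lemma card_sqEdges [DecidableEq V] {G : SimpleGraph V} {a b c d : V}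
    (h : IsSquare4 G a b c d) : #(sqEdges a b c d) = 4 := by
  obtain ⟨hab, hac, had, hbc, hbd, hcd, -⟩ := h
  rw [sqEdges, card_insert_of_notMem, card_insert_of_notMem, card_insert_of_notMem,
    card_singleton] <;> simp <;> tauto

lemma mem_sqEdges_of_three [DecidableEq V] {G : SimpleGraph V} {a b c d a' b' c' d' : V}
    (h : IsSquare4 G a b c d)
    (h₁ : s(a, b) ∈ sqEdges a' b' c' d') (h₂ : s(b, c) ∈ sqEdges a' b' c' d')
    (h₃ : s(c, d) ∈ sqEdges a' b' c' d') : s(d, a) ∈ sqEdges a' b' c' d' := by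
  obtain ⟨hab, hac, had, hbc, hbd, hcd, -⟩ := h
  simp only [sqEdges, mem_insert, mem_singleton, Sym2.eq_iff] at h₁ h₂ h₃ ⊢
  grind

lemma card_inter_add_two_le {α : Type*} [DecidableEq α] {s t : Finset α} {x y : α}
    (hx : x ∈ s \ t) (hy : y ∈ s \ t) (hxy : x ≠ y) : #(s ∩ t) + 2 ≤ #s := by
  have : 1 < #(s \ t) := one_lt_card.2 ⟨x, hx, y, hy, hxy⟩
  have := card_sdiff_add_card_inter s t
  omega

lemma card_inter_sqEdges_le_two_of_notMem [DecidableEq V] {G : SimpleGraph V}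
    {a b c d a' b' c' d' : V} (h : IsSquare4 G a b c d) (hda : s(d, a) ∉ sqEdges a' b' c' d') :
    #(sqEdges a b c d ∩ sqEdges a' b' c' d') ≤ 2 := by
  have two_missing : ∀ e ∈ sqEdges a b c d, e ∉ sqEdges a' b' c' d' → e ≠ s(d, a) →
      #(sqEdges a b c d ∩ sqEdges a' b' c' d') ≤ 2 := by
    intro e he heE hne
    have := card_inter_add_two_le (mem_sdiff.2 ⟨he, heE⟩)
      (mem_sdiff.2 ⟨by simp [sqEdges], hda⟩) hne
    rw [card_sqEdges h] at this
    omega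
  by_cases kab : s(a, b) ∈ sqEdges a' b' c' d'
  · by_cases kbc : s(b, c) ∈ sqEdges a' b' c' d'
    · exact two_missing _ (by simp [sqEdges])
        (fun kcd => hda (mem_sqEdges_of_three h kab kbc kcd))
        (by grind [IsSquare4])
    · exact two_missing _ (by simp [sqEdges]) kbc (by grind [IsSquare4])
  · exact two_missing _ (by simp [sqEdges]) kab (by grind [IsSquare4])

lemma card_inter_sqEdges_le_two [DecidableEq V] {G : SimpleGraph V} {a b c d a' b' c' d' : V}
    (h : IsSquare4 G a b c d) (hS : ¬ sqEdges a b c d ⊆ sqEdges a' b' c' d') :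
    #(sqEdges a b c d ∩ sqEdges a' b' c' d') ≤ 2 := by
  obtain ⟨e, he, heE⟩ := not_subset.1 hS
  simp only [sqEdges, mem_insert, mem_singleton] at he
  rcases he with rfl | rfl | rfl | rfl
  · rw [← sqEdges_rotate]
    exact card_inter_sqEdges_le_two_of_notMem h.rotate heE
  · rw [← sqEdges_rotate, ← sqEdges_rotate]
    exact card_inter_sqEdges_le_two_of_notMem h.rotate.rotate heE
  · rw [← sqEdges_rotate, ← sqEdges_rotate, ← sqEdges_rotate]
    exact card_inter_sqEdges_le_two_of_notMem h.rotate.rotate.rotate heE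
  · exact card_inter_sqEdges_le_two_of_notMem h heE

lemma eq_or_eq_of_degree_le_three [Fintype V] [DecidableEq V] {G : SimpleGraph V}
    [DecidableRel G.Adj] {v p q p' q' : V} (hv : G.degree v ≤ 3)
    (hp : G.Adj v p) (hq : G.Adj v q) (hp' : G.Adj v p') (hq' : G.Adj v q')
    (hpq : p ≠ q) (hpq' : p' ≠ q') : p = p' ∨ p = q' ∨ q = p' ∨ q = q' := by
  by_contra! hne
  have hsub : ({p, q, p', q'} : Finset V) ⊆ G.neighborFinset v := by
    simp [insert_subset_iff, hp, hq, hp', hq']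
  have hcard : #({p, q, p', q'} : Finset V) = 4 := by
    rw [card_insert_of_notMem, card_insert_of_notMem, card_insert_of_notMem,
      card_singleton] <;> simp_all
  have := card_le_card hsub
  rw [G.card_neighborFinset_eq_degree] at this
  omega

lemma exists_adj_mem_sqEdges [DecidableEq V] {G : SimpleGraph V} {a b c d v : V}
    (h : IsSquare4 G a b c d) (hv : v ∈ ({a, b, c, d} : Finset V)) :
    ∃ p q, G.Adj v p ∧ G.Adj v q ∧ p ≠ q ∧
      s(v, p) ∈ sqEdges a b c d ∧ s(v, q) ∈ sqEdges a b c d := by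
  obtain ⟨hab, hac, had, hbc, hbd, hcd, eab, ebc, ecd, eda⟩ := h
  simp only [mem_insert, mem_singleton] at hv
  rcases hv with rfl | rfl | rfl | rfl
  · exact ⟨b, d, eab, eda.symm, hbd, by simp [sqEdges], by simp [sqEdges, Sym2.eq_swap]⟩
  · exact ⟨a, c, eab.symm, ebc, hac, by simp [sqEdges, Sym2.eq_swap], by simp [sqEdges]⟩
  · exact ⟨b, d, ebc.symm, ecd, hbd, by simp [sqEdges, Sym2.eq_swap], by simp [sqEdges]⟩
  · exact ⟨c, a, ecd.symm, eda, hac.symm, by simp [sqEdges, Sym2.eq_swap], by simp [sqEdges]⟩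

lemma not_disjoint_sqEdges_of_mem [Fintype V] [DecidableEq V] {G : SimpleGraph V}
    [DecidableRel G.Adj] {a b c d a' b' c' d' v : V} (hv3 : G.degree v ≤ 3)
    (h : IsSquare4 G a b c d) (h' : IsSquare4 G a' b' c' d')
    (hv : v ∈ ({a, b, c, d} : Finset V)) (hv' : v ∈ ({a', b', c', d'} : Finset V)) :
    ¬ Disjoint (sqEdges a b c d) (sqEdges a' b' c' d') := by
  obtain ⟨p, q, hp, hq, hpq, hpS, hqS⟩ := exists_adj_mem_sqEdges h hv
  obtain ⟨p', q', hp', hq', hpq', hpS', hqS'⟩ := exists_adj_mem_sqEdges h' hv'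
  rw [not_disjoint_iff]
  rcases eq_or_eq_of_degree_le_three hv3 hp hq hp' hq' hpq hpq' with rfl | rfl | rfl | rfl
  · exact ⟨_, hpS, hpS'⟩
  · exact ⟨_, hpS, hqS'⟩
  · exact ⟨_, hqS, hpS'⟩
  · exact ⟨_, hqS, hqS'⟩

/-- In a subcubic graph `G`, any two distinct squares are
either vertex-disjoint or have exactly one or exactly two edges in common. -/
theorem squares_disjoint_or_share_one_or_two_edges {V : Type*} [Fintype V] [DecidableEq V]
    (G : SimpleGraph V) [DecidableRel G.Adj]
    (hsub : ∀ v : V, G.degree v ≤ 3)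
    (a b c d a' b' c' d' : V)
    (h : IsSquare4 G a b c d) (h' : IsSquare4 G a' b' c' d')
    (hne : sqEdges a b c d ≠ sqEdges a' b' c' d') :
    Disjoint ({a, b, c, d} : Finset V) ({a', b', c', d'} : Finset V) ∨
    (sqEdges a b c d ∩ sqEdges a' b' c' d').card = 1 ∨
    (sqEdges a b c d ∩ sqEdges a' b' c' d').card = 2 := by
  have hS : ¬ sqEdges a b c d ⊆ sqEdges a' b' c' d' := fun hS =>
    hne (eq_of_subset_of_card_le hS (by rw [card_sqEdges h, card_sqEdges h']))
  have hle := card_inter_sqEdges_le_two h hS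
  obtain h0 | h12 : #(sqEdges a b c d ∩ sqEdges a' b' c' d') = 0 ∨
      #(sqEdges a b c d ∩ sqEdges a' b' c' d') = 1 ∨
      #(sqEdges a b c d ∩ sqEdges a' b' c' d') = 2 := by omega
  · refine .inl (disjoint_left.2 fun v hv hv' => ?_)
    exact not_disjoint_sqEdges_of_mem (hsub v) h h' hv hv'
      (disjoint_iff_inter_eq_empty.2 (card_eq_zero.1 h0))
  · exact .inr h12

end Paper
end

section
/- Let s=(a,b,c,d) and s'=(c,d,e,f) be squares of the subcubic graph G that share exactly one edge, namely (c,d), and assume the weight function w is vertex-induced on s'. If M1 is a 2-matching of G that contains all four native edges of s, then there exists a 2-matching M2 of G with w(M2) ≥ w(M1) such that M2 does not contain all four native edges of s, and every square of G all of whose native edges lie in M2 also has all of its native edges in M1. -/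
open Finset
open scoped Classical

namespace Paper

variable {V : Type*}

/-! Replace the edges `cd`, `ef` of `s'` by `de`, `fc`. Since `w` is vertex-induced on `s'`,
both pairs weigh `r c + r d + r e + r f`, and each of `c, d, e, f` loses a `G`-edge, so
subcubicity keeps every degree at most two. A square of `M₂` that is not in `M₁` uses `de` or
`fc`; but `d, a, b, c` have degree at most two in `M₂`, so such a square is forced along the
whole path `e d a b c f` of five edges. -/

section TwoMatching

variable {G : SimpleGraph V} {M N : Finset (Sym2 V)} {v : V}

theorem degIn_mono (h : ∀ g ∈ M, v ∈ g → g ∈ N) : degIn M v ≤ degIn N v :=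
  card_le_card fun g hg => by
    rw [mem_filter] at hg ⊢
    exact ⟨h g hg.1 hg.2, hg.2⟩

theorem degIn_lt_degree [G.LocallyFinite] (hM : ∀ g ∈ M, g ∈ G.edgeSet)
    {g : Sym2 V} (hg : g ∈ G.edgeSet) (hvg : v ∈ g) (hgM : g ∉ M) :
    degIn M v < G.degree v := by
  classical
  rw [← G.card_incidenceFinset_eq_degree]
  refine card_lt_card ⟨fun g' hg' => ?_, fun h => hgM (mem_filter.1 (h ?_)).1⟩
  · rw [mem_filter] at hg'
    exact (G.mem_incidenceFinset _ _).2 ⟨hM g' hg'.1, hg'.2⟩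
  · exact (G.mem_incidenceFinset _ _).2 ⟨hg, hvg⟩

theorem notMem_of_degIn_le_two (hM : degIn M v ≤ 2) {g₁ g₂ g : Sym2 V}
    (h₁ : g₁ ∈ M) (h₂ : g₂ ∈ M) (hv₁ : v ∈ g₁) (hv₂ : v ∈ g₂) (hv : v ∈ g)
    (h₁₂ : g₁ ≠ g₂) (hg₁ : g ≠ g₁) (hg₂ : g ≠ g₂) : g ∉ M := fun hg =>
  absurd hM <| not_le.2 <| two_lt_card.2
    ⟨g₁, mem_filter.2 ⟨h₁, hv₁⟩, g₂, mem_filter.2 ⟨h₂, hv₂⟩, g, mem_filter.2 ⟨hg, hv⟩,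
      h₁₂, hg₁.symm, hg₂.symm⟩

theorem mem_of_subset_of_degIn_le (hNM : N ⊆ M) (h : degIn M v ≤ degIn N v) {g : Sym2 V}
    (hg : g ∈ M) (hvg : v ∈ g) : g ∈ N := by
  have heq := eq_of_subset_of_card_le (filter_subset_filter (v ∈ ·) hNM) h
  exact (mem_filter.1 (heq ▸ mem_filter.2 ⟨hg, hvg⟩)).1

end TwoMatching

theorem sum_le_sum_sdiff_union {α β : Type*} [DecidableEq α] [AddCommMonoid β] [PartialOrder β]
    [IsOrderedAddMonoid β] {w : α → β} {M out new : Finset α} (hout : ∀ x ∈ out, 0 ≤ w x)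
    (hnew : Disjoint M new) (h : ∑ x ∈ out, w x ≤ ∑ x ∈ new, w x) :
    ∑ x ∈ M, w x ≤ ∑ x ∈ M \ out ∪ new, w x := by
  rw [sum_union (hnew.mono_left sdiff_subset), ← sum_inter_add_sum_sdiff M out, add_comm]
  exact add_le_add le_rfl
    ((sum_le_sum_of_subset_of_nonneg inter_subset_right fun x hx _ => hout x hx).trans h)

def squareSwitch [DecidableEq V] (M : Finset (Sym2 V)) (c d e f : V) : Finset (Sym2 V) :=
  M \ {s(c, d), s(e, f)} ∪ {s(d, e), s(f, c)}

theorem mem_squareSwitch [DecidableEq V] {M : Finset (Sym2 V)} {c d e f : V} {g : Sym2 V} :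
    g ∈ squareSwitch M c d e f ↔
      (g ∈ M ∧ g ≠ s(c, d) ∧ g ≠ s(e, f)) ∨ g = s(d, e) ∨ g = s(f, c) := by
  simp only [squareSwitch, mem_union, mem_sdiff, mem_insert, mem_singleton, not_or]

theorem IsSquare4.notMem_squareSwitch [DecidableEq V] {G : SimpleGraph V} {c d e f : V}
    (hsq : IsSquare4 G c d e f) (M : Finset (Sym2 V)) :
    s(c, d) ∉ squareSwitch M c d e f ∧ s(e, f) ∉ squareSwitch M c d e f := by
  obtain ⟨hcd, hce, hcf, hde, hdf, hef, -⟩ := hsq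
  constructor <;> rw [mem_squareSwitch] <;> grind [Sym2.eq_iff]

theorem is2Matching_squareSwitch [DecidableEq V] {G : SimpleGraph V} [G.LocallyFinite]
    (hsub : ∀ v, G.degree v ≤ 3) {M : Finset (Sym2 V)} {c d e f : V}
    (hsq : IsSquare4 G c d e f) (hM : Is2Matching G M) :
    Is2Matching G (squareSwitch M c d e f) := by
  have hnot := hsq.notMem_squareSwitch M
  obtain ⟨-, -, -, -, -, -, hAcd, hAde, hAef, hAfc⟩ := hsq
  have hG : ∀ g ∈ squareSwitch M c d e f, g ∈ G.edgeSet := by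
    intro g hg
    rcases mem_squareSwitch.1 hg with ⟨hgM, -⟩ | rfl | rfl
    exacts [hM.1 g hgM, hAde, hAfc]
  refine ⟨hG, fun v => ?_⟩
  by_cases hv : v ∈ s(c, d)
  · have := degIn_lt_degree hG hAcd hv hnot.1
    linarith [hsub v]
  by_cases hv' : v ∈ s(e, f)
  · have := degIn_lt_degree hG hAef hv' hnot.2
    linarith [hsub v]
  refine le_trans (degIn_mono fun g hg hvg => ?_) (hM.2 v)
  simp only [Sym2.mem_iff, not_or] at hv hv'
  rcases mem_squareSwitch.1 hg with ⟨hgM, -⟩ | rfl | rfl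
  · exact hgM
  all_goals simp_all

theorem sum_le_sum_squareSwitch [DecidableEq V] {G : SimpleGraph V} {c d e f : V}
    (hsq : IsSquare4 G c d e f) {w : Sym2 V → ℝ} (hw : ∀ g, 0 ≤ w g) {M : Finset (Sym2 V)}
    (hdeM : s(d, e) ∉ M) (hfcM : s(f, c) ∉ M)
    (hweight : w s(c, d) + w s(e, f) ≤ w s(d, e) + w s(f, c)) :
    ∑ g ∈ M, w g ≤ ∑ g ∈ squareSwitch M c d e f, w g := by
  obtain ⟨hcd, hce, hcf, hde, hdf, hef, -⟩ := hsq
  refine sum_le_sum_sdiff_union (fun g _ => hw g) (by simp [hdeM, hfcM]) ?_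
  rwa [sum_pair (by grind [Sym2.eq_iff]), sum_pair (by grind [Sym2.eq_iff])]

theorem IsSquare4.weight_eq_of_potential {G : SimpleGraph V} {c d e f : V}
    (hsq : IsSquare4 G c d e f) {w : Sym2 V → ℝ} {r : V → ℝ}
    (hr : ∀ x y : V, (x = c ∨ x = d ∨ x = e ∨ x = f) → (y = c ∨ y = d ∨ y = e ∨ y = f) →
      G.Adj x y → w s(x, y) = r x + r y) :
    w s(c, d) + w s(e, f) = w s(d, e) + w s(f, c) := by
  obtain ⟨-, -, -, -, -, -, hcd, hde, hef, hfc⟩ := hsq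
  rw [hr c d (by simp) (by simp) hcd, hr e f (by simp) (by simp) hef,
    hr d e (by simp) (by simp) hde, hr f c (by simp) (by simp) hfc]
  ring

section Square

variable [DecidableEq V] {G : SimpleGraph V} {x y z u v : V} {g : Sym2 V}

theorem two_le_degIn_sqEdges (hQ : IsSquare4 G x y z u) (hg : g ∈ sqEdges x y z u)
    (hv : v ∈ g) : 2 ≤ degIn (sqEdges x y z u) v := by
  obtain ⟨hxy, hxz, hxu, hyz, hyu, hzu, -⟩ := hQ
  have hv' : v = x ∨ v = y ∨ v = z ∨ v = u := by
    simp only [sqEdges, mem_insert, mem_singleton] at hg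
    rcases hg with rfl | rfl | rfl | rfl <;> simp only [Sym2.mem_iff] at hv <;> tauto
  refine one_lt_card.2 ?_
  simp only [mem_filter, sqEdges, mem_insert, mem_singleton]
  rcases hv' with rfl | rfl | rfl | rfl
  · exact ⟨s(v, y), by simp, s(u, v), by simp, by rw [Ne, Sym2.eq_iff]; tauto⟩
  · exact ⟨s(x, v), by simp, s(v, z), by simp, by rw [Ne, Sym2.eq_iff]; tauto⟩
  · exact ⟨s(y, v), by simp, s(v, u), by simp, by rw [Ne, Sym2.eq_iff]; tauto⟩
  · exact ⟨s(z, v), by simp, s(v, x), by simp, by rw [Ne, Sym2.eq_iff]; tauto⟩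

theorem mem_sqEdges_of_degIn_le_two {M : Finset (Sym2 V)} (hQ : IsSquare4 G x y z u)
    (hQM : sqEdges x y z u ⊆ M) (hM : degIn M v ≤ 2) (hg : g ∈ sqEdges x y z u) (hvg : v ∈ g)
    {g' : Sym2 V} (hg' : g' ∈ M) (hvg' : v ∈ g') : g' ∈ sqEdges x y z u :=
  mem_of_subset_of_degIn_le hQM (hM.trans (two_le_degIn_sqEdges hQ hg hvg)) hg' hvg'

theorem notMem_sqEdges_of_path {M : Finset (Sym2 V)} (hQ : IsSquare4 G x y z u)
    (hQM : sqEdges x y z u ⊆ M) (hM : ∀ v, degIn M v ≤ 2) {v₀ v₁ v₂ v₃ v₄ v₅ : V}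
    (h₁ : s(v₀, v₁) ∈ M) (h₂ : s(v₁, v₂) ∈ M) (h₃ : s(v₂, v₃) ∈ M) (h₄ : s(v₃, v₄) ∈ M)
    (h₅ : s(v₄, v₅) ∈ M)
    (hcard : #{s(v₀, v₁), s(v₁, v₂), s(v₂, v₃), s(v₃, v₄), s(v₄, v₅)} = 5) :
    s(v₀, v₁) ∉ sqEdges x y z u ∧ s(v₄, v₅) ∉ sqEdges x y z u := by
  have step {p v q : V} (hp : s(p, v) ∈ M) (hq : s(v, q) ∈ M) :
      s(p, v) ∈ sqEdges x y z u ↔ s(v, q) ∈ sqEdges x y z u :=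
    ⟨fun h => mem_sqEdges_of_degIn_le_two hQ hQM (hM v) h (by simp) hq (by simp),
      fun h => mem_sqEdges_of_degIn_le_two hQ hQM (hM v) h (by simp) hp (by simp)⟩
  have h₁₂ := step h₁ h₂
  have h₂₃ := step h₂ h₃
  have h₃₄ := step h₃ h₄
  have h₄₅ := step h₄ h₅
  have hnot : s(v₀, v₁) ∉ sqEdges x y z u := fun h => by
    have hsub : {s(v₀, v₁), s(v₁, v₂), s(v₂, v₃), s(v₃, v₄), s(v₄, v₅)} ⊆ sqEdges x y z u := by
      simp only [insert_subset_iff, singleton_subset_iff]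
      exact ⟨h, h₁₂.1 h, h₂₃.1 (h₁₂.1 h), h₃₄.1 (h₂₃.1 (h₁₂.1 h)),
        h₄₅.1 (h₃₄.1 (h₂₃.1 (h₁₂.1 h)))⟩
    have := card_le_card hsub
    have : #(sqEdges x y z u) ≤ 4 := card_le_four
    omega
  exact ⟨hnot, fun h => hnot (h₁₂.2 (h₂₃.2 (h₃₄.2 (h₄₅.2 h))))⟩

end Square

theorem ne_of_sqEdges_inter_eq_singleton [DecidableEq V] {G : SimpleGraph V} {a b c d e f : V}
    (hs : IsSquare4 G a b c d) (hshare : sqEdges a b c d ∩ sqEdges c d e f = {s(c, d)}) :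
    a ≠ e ∧ b ≠ f := by
  obtain ⟨-, hac, -, hbc, hbd, hcd, -⟩ := hs
  constructor <;> rintro rfl
  · have h : s(d, a) ∈ sqEdges a b c d ∩ sqEdges c d a f := by simp [sqEdges]
    rw [hshare, mem_singleton, Sym2.eq_iff] at h
    tauto
  · have h : s(b, c) ∈ sqEdges a b c d ∩ sqEdges c d e b := by simp [sqEdges]
    rw [hshare, mem_singleton, Sym2.eq_iff] at h
    tauto

theorem Is2Matching.notMem_of_sqEdges_inter_eq_singleton [DecidableEq V] {G : SimpleGraph V}
    {M : Finset (Sym2 V)} (hM : Is2Matching G M) {a b c d e f : V} (hs : IsSquare4 G a b c d)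
    (hs' : IsSquare4 G c d e f) (hshare : sqEdges a b c d ∩ sqEdges c d e f = {s(c, d)})
    (hsM : sqEdges a b c d ⊆ M) : s(d, e) ∉ M ∧ s(f, c) ∉ M := by
  obtain ⟨hae, hbf⟩ := ne_of_sqEdges_inter_eq_singleton hs hshare
  obtain ⟨-, hac, -, -, hbd, hcd, -⟩ := hs
  obtain ⟨-, hce, -, -, hdf, -⟩ := hs'
  simp only [sqEdges, insert_subset_iff, singleton_subset_iff] at hsM
  obtain ⟨-, hbc, hcd₁, hda⟩ := hsM
  exact ⟨notMem_of_degIn_le_two (hM.2 d) hcd₁ hda (by simp) (by simp) (by simp)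
      (by grind [Sym2.eq_iff]) (by grind [Sym2.eq_iff]) (by grind [Sym2.eq_iff]),
    notMem_of_degIn_le_two (hM.2 c) hbc hcd₁ (by simp) (by simp) (by simp)
      (by grind [Sym2.eq_iff]) (by grind [Sym2.eq_iff]) (by grind [Sym2.eq_iff])⟩

theorem card_path_of_sqEdges_inter_eq_singleton [DecidableEq V] {G : SimpleGraph V}
    {a b c d e f : V} (hs : IsSquare4 G a b c d) (hs' : IsSquare4 G c d e f)
    (hshare : sqEdges a b c d ∩ sqEdges c d e f = {s(c, d)}) :
    #{s(e, d), s(d, a), s(a, b), s(b, c), s(c, f)} = 5 := by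
  obtain ⟨hae, hbf⟩ := ne_of_sqEdges_inter_eq_singleton hs hshare
  obtain ⟨hab, hac, had, hbc, hbd, hcd, -⟩ := hs
  obtain ⟨-, hce, hcf, hde, hdf, hef, -⟩ := hs'
  grind [card_insert_of_notMem, Sym2.eq_iff]

/-- Let `s = (a,b,c,d)` and `s' = (c,d,e,f)` be squares of a
subcubic graph `G` sharing exactly the edge `(c,d)`, and let `w` be
vertex-induced on `s'`. If `M₁` is a 2-matching of `G` containing all four
native edges of `s`, then there is a 2-matching `M₂` with `w(M₂) ≥ w(M₁)`
that does not contain all native edges of `s`, and every square of `G` whose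
native edges all lie in `M₂` also has all of its native edges in `M₁`. -/
theorem remove_square_sharing_one_edge {V : Type*} [Fintype V] [DecidableEq V]
    (G : SimpleGraph V) [DecidableRel G.Adj]
    (hsub : ∀ v : V, G.degree v ≤ 3)
    (w : Sym2 V → ℝ) (hw : ∀ e, 0 ≤ w e)
    (a b c d e f : V)
    (hs : IsSquare4 G a b c d) (hs' : IsSquare4 G c d e f)
    (hshare : sqEdges a b c d ∩ sqEdges c d e f = {s(c, d)})
    (hvi : ∃ r : V → ℝ, ∀ x y : V, (x = c ∨ x = d ∨ x = e ∨ x = f) →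
      (y = c ∨ y = d ∨ y = e ∨ y = f) → G.Adj x y → w s(x, y) = r x + r y)
    (M₁ : Finset (Sym2 V)) (hM₁ : Is2Matching G M₁)
    (hsM₁ : sqEdges a b c d ⊆ M₁) :
    ∃ M₂ : Finset (Sym2 V), Is2Matching G M₂ ∧
      ∑ e' ∈ M₁, w e' ≤ ∑ e' ∈ M₂, w e' ∧
      ¬ sqEdges a b c d ⊆ M₂ ∧
      ∀ x y z u : V, IsSquare4 G x y z u → sqEdges x y z u ⊆ M₂ →
        sqEdges x y z u ⊆ M₁ := by
  have hM₂ := is2Matching_squareSwitch hsub hs' hM₁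
  obtain ⟨hdeM₁, hfcM₁⟩ := hM₁.notMem_of_sqEdges_inter_eq_singleton hs hs' hshare hsM₁
  obtain ⟨r, hr⟩ := hvi
  have hkeep : ∀ g ∈ sqEdges a b c d, g ≠ s(c, d) → g ∈ squareSwitch M₁ c d e f := by
    refine fun g hg hne => mem_squareSwitch.2 (Or.inl ⟨hsM₁ hg, hne, fun hef => hne ?_⟩)
    have h : g ∈ sqEdges a b c d ∩ sqEdges c d e f := mem_inter.2 ⟨hg, by simp [sqEdges, hef]⟩
    rwa [hshare, mem_singleton] at h
  refine ⟨squareSwitch M₁ c d e f, hM₂,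
    sum_le_sum_squareSwitch hs' hw hdeM₁ hfcM₁ (hs'.weight_eq_of_potential hr).le,
    fun h => (hs'.notMem_squareSwitch M₁).1 (h (by simp [sqEdges])), ?_⟩
  intro x y z u hQ hQM g hg
  have ⟨hab, hac, had, hbc, hbd, hcd, _⟩ := hs
  have hpath := notMem_sqEdges_of_path hQ hQM hM₂.2
    (mem_squareSwitch.2 (Or.inr (Or.inl Sym2.eq_swap)))
    (hkeep _ (by simp [sqEdges]) (by grind [Sym2.eq_iff]))
    (hkeep _ (by simp [sqEdges]) (by grind [Sym2.eq_iff]))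
    (hkeep _ (by simp [sqEdges]) (by grind [Sym2.eq_iff]))
    (mem_squareSwitch.2 (Or.inr (Or.inr Sym2.eq_swap)))
    (card_path_of_sqEdges_inter_eq_singleton hs hs' hshare)
  rcases mem_squareSwitch.1 (hQM hg) with ⟨hg₁, -⟩ | rfl | rfl
  · exact hg₁
  · exact absurd (Sym2.eq_swap ▸ hg) hpath.1
  · exact absurd (Sym2.eq_swap ▸ hg) hpath.2

end Paper
end
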